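/- arXiv:1601.07005 — 6 statements merged into one kernel-verified Lean document; each statement's English description precedes it below -/
import Mathlib

section
/- Let {R_e, D_A, f_e} be a G-branching system on a σ-finite measure space (X, μ) for an ultragraph G. For each e ∈ 𝒢¹ define an operator S_e on L²(X, μ) by S_e(φ) = Φ_{f_e⁻¹}^{1/2} · (φ ∘ f_e⁻¹) (extended by zero off R_e). Then S_e is a bounded operator on L²(X, μ) that is a partial isometry, and its adjoint is given by S_e*(φ) = Φ_{f_e}^{1/2} · (φ ∘ f_e) (extended by zero off D_{r(e)}). Moreover S_e S_e* is multiplication by χ_{R_e} and S_e* S_e is multiplication by χ_{D_{r(e)}}. -/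
open MeasureTheory Filter Set
open scoped ENNReal

universe u v w

structure Ultragraph (V : Type u) (E : Type v) where
  s : E → V
  r : E → Set V
  r_nonempty : ∀ e, (r e).Nonempty

namespace Ultragraph

variable {V : Type u} {E : Type v}

/-- The lattice `𝒢⁰` of Tomforde (with `∅` included, so that `p_∅ = 0` makes sense). -/
inductive InG0 (G : Ultragraph V E) : Set V → Prop
  | empty : InG0 G ∅
  | singleton (v : V) : InG0 G {v}
  | range (e : E) : InG0 G (G.r e)
  | union {A B : Set V} : InG0 G A → InG0 G B → InG0 G (A ∪ B)
  | inter {A B : Set V} : InG0 G A → InG0 G B → InG0 G (A ∩ B)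

/-- A `G`-branching system on a measure space `(X, μ)`. -/
structure BranchingSystem (G : Ultragraph V E) (X : Type w) [MeasurableSpace X]
    (μ : Measure X) where
  R : E → Set X
  D : Set V → Set X
  f : E → X → X
  finv : E → X → X
  measurableSet_R : ∀ e, MeasurableSet (R e)
  measurableSet_D : ∀ A, G.InG0 A → MeasurableSet (D A)
  ae_disjoint : ∀ e e', e ≠ e' → μ (R e ∩ R e') = 0
  D_empty : D ∅ = ∅
  D_inter : ∀ A B, G.InG0 A → G.InG0 B → (D A ∩ D B : Set X) =ᵐ[μ] (D (A ∩ B) : Set X)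
  D_union : ∀ A B, G.InG0 A → G.InG0 B → (D A ∪ D B : Set X) =ᵐ[μ] (D (A ∪ B) : Set X)
  R_subset_D : ∀ e, μ (R e \ D {G.s e}) = 0
  D_eq_iUnion : ∀ v, {e | G.s e = v}.Finite → {e | G.s e = v}.Nonempty →
    (D {v} : Set X) =ᵐ[μ] (⋃ e ∈ {e | G.s e = v}, R e : Set X)
  measurable_f : ∀ e, Measurable (f e)
  measurable_finv : ∀ e, Measurable (finv e)
  mapsTo_f : ∀ e, Set.MapsTo (f e) (D (G.r e)) (R e)
  mapsTo_finv : ∀ e, Set.MapsTo (finv e) (R e) (D (G.r e))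
  f_finv : ∀ e, ∀ᵐ x ∂(μ.restrict (R e)), f e (finv e x) = x
  finv_f : ∀ e, ∀ᵐ x ∂(μ.restrict (D (G.r e))), finv e (f e x) = x
  pushforward_f_ac : ∀ e, (μ.restrict (R e)).map (finv e) ≪ μ.restrict (D (G.r e))
  pushforward_finv_ac : ∀ e, (μ.restrict (D (G.r e))).map (f e) ≪ μ.restrict (R e)

variable {G : Ultragraph V E} {X : Type w} [MeasurableSpace X] {μ : Measure X}

/-- `Φ_{f_e} = d(μ ∘ f_e)/dμ` (where `μ ∘ f_e` is the pushforward of `μ|_{R_e}` by `f_e⁻¹`). -/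
noncomputable def BranchingSystem.PhiF (B : BranchingSystem G X μ) (e : E) : X → ℝ≥0∞ :=
  ((μ.restrict (B.R e)).map (B.finv e)).rnDeriv μ

/-- `Φ_{f_e⁻¹} = d(μ ∘ f_e⁻¹)/dμ`. -/
noncomputable def BranchingSystem.PhiFinv (B : BranchingSystem G X μ) (e : E) : X → ℝ≥0∞ :=
  ((μ.restrict (B.D (G.r e))).map (B.f e)).rnDeriv μ

/-- `S_e φ = Φ_{f_e⁻¹}^{1/2} ⬝ (φ ∘ f_e⁻¹)`, extended by zero off `R_e`. -/
noncomputable def BranchingSystem.SFun (B : BranchingSystem G X μ) (e : E) (φ : X → ℂ) :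
    X → ℂ :=
  (B.R e).indicator fun x => (Real.sqrt ((B.PhiFinv e x).toReal) : ℂ) * φ (B.finv e x)

/-- `S_e^* φ = Φ_{f_e}^{1/2} ⬝ (φ ∘ f_e)`, extended by zero off `D_{r(e)}`. -/
noncomputable def BranchingSystem.SStarFun (B : BranchingSystem G X μ) (e : E) (φ : X → ℂ) :
    X → ℂ :=
  (B.D (G.r e)).indicator fun x => (Real.sqrt ((B.PhiF e x).toReal) : ℂ) * φ (B.f e x)

/-- `f_α = f_{α₁} ∘ ⋯ ∘ f_{αₙ}` for a path `α`. -/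
def BranchingSystem.fPath (B : BranchingSystem G X μ) :
    ∀ k : ℕ, (Fin (k + 1) → E) → X → X
  | 0, α => B.f (α 0)
  | k + 1, α => B.f (α 0) ∘ BranchingSystem.fPath B k fun i => α i.succ

/-- A Cuntz–Krieger `G`-family in a star ring. -/
structure CKFamily (G : Ultragraph V E) (A : Type w) [NonUnitalRing A] [StarRing A] where
  P : Set V → A
  S : E → A
  P_empty : P ∅ = 0
  P_star : ∀ B, G.InG0 B → star (P B) = P B
  P_mul : ∀ B C, G.InG0 B → G.InG0 C → P B * P C = P (B ∩ C)
  P_union : ∀ B C, G.InG0 B → G.InG0 C → P (B ∪ C) = P B + P C - P (B ∩ C)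
  S_orth : ∀ e e', e ≠ e' → star (S e) * S e' = 0
  S_star_mul : ∀ e, star (S e) * S e = P (G.r e)
  S_le : ∀ e, P {G.s e} * (S e * star (S e)) = S e * star (S e)
  CK : ∀ v, (h : {e | G.s e = v}.Finite) → {e | G.s e = v}.Nonempty →
    P {v} = ∑ e ∈ h.toFinset, S e * star (S e)

/-- `s_α = s_{α₁} ⋯ s_{αₙ}` for a path `α`. -/
def CKFamily.sPath {A : Type w} [NonUnitalRing A] [StarRing A] (F : CKFamily G A) :
    ∀ k : ℕ, (Fin (k + 1) → E) → A
  | 0, α => F.S (α 0)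
  | k + 1, α => F.S (α 0) * CKFamily.sPath F k fun i => α i.succ

def IsPath (G : Ultragraph V E) {k : ℕ} (α : Fin (k + 1) → E) : Prop :=
  ∀ i : Fin k, G.s (α i.succ) ∈ G.r (α i.castSucc)

def IsCycle (G : Ultragraph V E) {k : ℕ} (α : Fin (k + 1) → E) : Prop :=
  IsPath G α ∧ G.s (α 0) ∈ G.r (α (Fin.last k))

/-- A simple cycle without exits: a cycle with pairwise distinct edges such that each
`r(αᵢ)` is a singleton and `s⁻¹(s(αᵢ)) = {αᵢ}`. -/
def IsSimpleCycleNoExits (G : Ultragraph V E) {k : ℕ} (α : Fin (k + 1) → E) : Prop :=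
  IsCycle G α ∧ Function.Injective α ∧
    ∀ i, (∃ w, G.r (α i) = {w}) ∧ ∀ e, G.s e = G.s (α i) → e = α i

def HasExit (G : Ultragraph V E) {k : ℕ} (α : Fin (k + 1) → E) : Prop :=
  (∃ i : Fin k, {e | G.s e ∈ G.r (α i.castSucc)} ≠ {α i.succ}) ∨
  {e | G.s e ∈ G.r (α (Fin.last k))} ≠ {α 0} ∨
  ∃ i, ∃ v ∈ G.r (α i), ∀ e, G.s e ≠ v

def ConditionL (G : Ultragraph V E) : Prop :=
  ∀ (k : ℕ) (α : Fin (k + 1) → E), IsCycle G α → HasExit G α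

def Hereditary (G : Ultragraph V E) (H : Set (Set V)) : Prop :=
  (∀ A ∈ H, G.InG0 A) ∧ (∀ A ∈ H, ∀ B ∈ H, A ∪ B ∈ H) ∧
  (∀ A ∈ H, ∀ B, G.InG0 B → B ⊆ A → B ∈ H) ∧
  ∀ e, {G.s e} ∈ H → G.r e ∈ H

def Saturated (G : Ultragraph V E) (T : Set (Set V)) : Prop :=
  ∀ v, {e | G.s e = v}.Finite → {e | G.s e = v}.Nonempty →
    (∀ e, G.s e = v → G.r e ∈ T) → {v} ∈ T

end Ultragraph

/-- A closed two-sided (complex) ideal, as a subset. -/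
def IsClosedTwoSidedIdealIn (A : Type w) [NonUnitalNormedRing A] [Module ℂ A]
    (J : Set A) : Prop :=
  IsClosed J ∧ (0 : A) ∈ J ∧ (∀ x ∈ J, ∀ y ∈ J, x + y ∈ J) ∧
    (∀ (c : ℂ), ∀ x ∈ J, c • x ∈ J) ∧ ∀ x ∈ J, ∀ a, a * x ∈ J ∧ x * a ∈ J

/-- The smallest closed two-sided ideal containing `s`. -/
def idealGeneratedBy {A : Type w} [NonUnitalNormedRing A] [Module ℂ A] (s : Set A) : Set A :=
  ⋂₀ {J | IsClosedTwoSidedIdealIn A J ∧ s ⊆ J}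

namespace Ultragraph

/-- A model of the ultragraph C*-algebra `C*(G)`: a C*-algebra generated by a universal
Cuntz–Krieger `G`-family, together with its gauge action. -/
structure UltragraphCStarAlgebra (G : Ultragraph V E) (A : Type w)
    [NonUnitalNormedRing A] [StarRing A] [CStarRing A] [NormedSpace ℂ A]
    [IsScalarTower ℂ A A] [SMulCommClass ℂ A A] [StarModule ℂ A] [CompleteSpace A] where
  fam : CKFamily G A
  P_ne_zero : ∀ B, G.InG0 B → B.Nonempty → fam.P B ≠ 0
  generates : ∀ C : Set A, IsClosed C →
    (∀ x ∈ C, ∀ y ∈ C, x + y ∈ C) → (∀ x ∈ C, ∀ y ∈ C, x * y ∈ C) →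
    (∀ (c : ℂ), ∀ x ∈ C, c • x ∈ C) → (∀ x ∈ C, star x ∈ C) →
    (∀ B, G.InG0 B → fam.P B ∈ C) → (∀ e, fam.S e ∈ C) → ∀ x, x ∈ C
  gauge : ∀ z : ℂ, ‖z‖ = 1 → A ≃⋆ₐ[ℂ] A
  gauge_P : ∀ z hz B, G.InG0 B → gauge z hz (fam.P B) = fam.P B
  gauge_S : ∀ z hz e, gauge z hz (fam.S e) = z • fam.S e
  universal : ∀ (B : Type w) [NonUnitalNormedRing B] [StarRing B] [CStarRing B]
    [NormedSpace ℂ B] [IsScalarTower ℂ B B] [SMulCommClass ℂ B B] [StarModule ℂ B]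
    [CompleteSpace B], ∀ F : CKFamily G B,
    ∃ φ : A →⋆ₙₐ[ℂ] B, Continuous φ ∧
      (∀ C, G.InG0 C → φ (fam.P C) = F.P C) ∧ ∀ e, φ (fam.S e) = F.S e

end Ultragraph

/-!
Let `f : D → R` and `g : R → D` be mutually inverse up to null sets and nonsingular, and let
`Φ_f = d(f_* μ|_D)/dμ`. Then `f_* μ|_D = Φ_f · μ|_R`, i.e. `∫_R Φ_f k = ∫_D k ∘ f`, so
`S φ = 1_R Φ_f^{1/2} (φ ∘ g)` satisfies `‖S φ‖ = ‖1_D φ‖`. Changing variables along `g` and back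
along `f` gives the chain rule `Φ_g · (Φ_f ∘ f) = 1` on `D`. With it, the same change of variables
shows that the operator built from `g` is the adjoint `S^*`, and a pointwise computation shows
`S^* S = 1_D`, `S S^* = 1_R`; the partial isometry relation `S S^* S = S` follows since `S φ`
vanishes off `R`.
-/

namespace MeasureTheory

variable {X : Type*} [MeasurableSpace X] {μ : Measure X} {f g : X → X} {D R : Set X}
  {𝕜 : Type*} [RCLike 𝕜]

noncomputable def pushforwardDensity (μ : Measure X) (f : X → X) (D : Set X) : X → ℝ≥0∞ :=
  ((μ.restrict D).map f).rnDeriv μ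

theorem measurable_pushforwardDensity : Measurable (pushforwardDensity μ f D) :=
  Measure.measurable_rnDeriv _ _

structure IsNonsingularPartialInverse (μ : Measure X) (f g : X → X) (D R : Set X) : Prop where
  measurableSet_source : MeasurableSet D
  measurableSet_target : MeasurableSet R
  quasiMeasurePreserving : Measure.QuasiMeasurePreserving f (μ.restrict D) (μ.restrict R)
  quasiMeasurePreserving_inv : Measure.QuasiMeasurePreserving g (μ.restrict R) (μ.restrict D)
  left_inv : ∀ᵐ x ∂μ.restrict D, g (f x) = x
  right_inv : ∀ᵐ x ∂μ.restrict R, f (g x) = x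

namespace IsNonsingularPartialInverse

theorem symm (h : IsNonsingularPartialInverse μ f g D R) : IsNonsingularPartialInverse μ g f R D :=
  ⟨h.measurableSet_target, h.measurableSet_source, h.quasiMeasurePreserving_inv,
    h.quasiMeasurePreserving, h.right_inv, h.left_inv⟩

theorem ae_mem_target (h : IsNonsingularPartialInverse μ f g D R) :
    ∀ᵐ x ∂μ.restrict D, f x ∈ R :=
  h.quasiMeasurePreserving.ae (ae_restrict_mem h.measurableSet_target)

theorem map_map_eq (h : IsNonsingularPartialInverse μ f g D R) :
    ((μ.restrict D).map f).map g = μ.restrict D := by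
  rw [Measure.map_map h.quasiMeasurePreserving_inv.measurable h.quasiMeasurePreserving.measurable]
  exact (Measure.map_congr h.left_inv).trans Measure.map_id

theorem sigmaFinite_map [SigmaFinite μ] (h : IsNonsingularPartialInverse μ f g D R) :
    SigmaFinite ((μ.restrict D).map f) :=
  SigmaFinite.of_map _ h.quasiMeasurePreserving_inv.measurable.aemeasurable
    (by rw [h.map_map_eq]; infer_instance)

theorem pushforwardDensity_lt_top [SigmaFinite μ] (h : IsNonsingularPartialInverse μ f g D R) :
    ∀ᵐ x ∂μ, pushforwardDensity μ f D x < ∞ :=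
  have := h.sigmaFinite_map
  Measure.rnDeriv_lt_top _ _

theorem withDensity_pushforwardDensity [SigmaFinite μ] (h : IsNonsingularPartialInverse μ f g D R) :
    (μ.restrict R).withDensity (pushforwardDensity μ f D) = (μ.restrict D).map f := by
  have := h.sigmaFinite_map
  have hac : (μ.restrict D).map f ≪ μ := h.quasiMeasurePreserving.absolutelyContinuous.trans
    (Measure.absolutelyContinuous_of_le Measure.restrict_le_self)
  rw [← restrict_withDensity h.measurableSet_target, pushforwardDensity,
    Measure.withDensity_rnDeriv_eq _ _ hac]
  exact Measure.restrict_eq_self_of_ae_mem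
    (h.quasiMeasurePreserving.absolutelyContinuous.ae_le (ae_restrict_mem h.measurableSet_target))

theorem setLIntegral_pushforwardDensity_mul [SigmaFinite μ]
    (h : IsNonsingularPartialInverse μ f g D R) {k : X → ℝ≥0∞} (hk : Measurable k) :
    ∫⁻ x in R, pushforwardDensity μ f D x * k x ∂μ = ∫⁻ y in D, k (f y) ∂μ :=
  calc ∫⁻ x in R, pushforwardDensity μ f D x * k x ∂μ
      = ∫⁻ x, k x ∂(μ.restrict R).withDensity (pushforwardDensity μ f D) :=
        (lintegral_withDensity_eq_lintegral_mul _ measurable_pushforwardDensity hk).symm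
    _ = ∫⁻ y in D, k (f y) ∂μ := by
      rw [h.withDensity_pushforwardDensity, lintegral_map hk h.quasiMeasurePreserving.measurable]

theorem setIntegral_pushforwardDensity_smul [SigmaFinite μ]
    (h : IsNonsingularPartialInverse μ f g D R) {k : X → 𝕜} (hk : Measurable k) :
    ∫ x in R, (pushforwardDensity μ f D x).toReal • k x ∂μ = ∫ y in D, k (f y) ∂μ := by
  rw [← integral_withDensity_eq_integral_toReal_smul measurable_pushforwardDensity
    (ae_restrict_of_ae h.pushforwardDensity_lt_top), h.withDensity_pushforwardDensity,
    integral_map h.quasiMeasurePreserving.measurable.aemeasurable hk.aestronglyMeasurable]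

theorem setLIntegral_pushforwardDensity_mul_comp_mul [SigmaFinite μ]
    (h : IsNonsingularPartialInverse μ f g D R) {k : X → ℝ≥0∞} (hk : Measurable k) :
    ∫⁻ y in D, pushforwardDensity μ g R y * (pushforwardDensity μ f D (f y) * k y) ∂μ
      = ∫⁻ y in D, k y ∂μ :=
  calc _ = ∫⁻ x in R, pushforwardDensity μ f D (f (g x)) * k (g x) ∂μ :=
        h.symm.setLIntegral_pushforwardDensity_mul
          ((measurable_pushforwardDensity.comp h.quasiMeasurePreserving.measurable).mul hk)
    _ = ∫⁻ x in R, pushforwardDensity μ f D x * k (g x) ∂μ :=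
        lintegral_congr_ae (h.right_inv.mono fun x hx => by simp only [hx])
    _ = ∫⁻ y in D, k (g (f y)) ∂μ :=
        h.setLIntegral_pushforwardDensity_mul (hk.comp h.quasiMeasurePreserving_inv.measurable)
    _ = ∫⁻ y in D, k y ∂μ := lintegral_congr_ae (h.left_inv.mono fun y hy => by simp only [hy])

theorem ae_pushforwardDensity_comp_mul_eq_one [SigmaFinite μ]
    (h : IsNonsingularPartialInverse μ f g D R) :
    ∀ᵐ y ∂μ.restrict D, pushforwardDensity μ g R y * pushforwardDensity μ f D (f y) = 1 := by
  refine ae_eq_of_forall_setLIntegral_eq_of_sigmaFinite (measurable_pushforwardDensity.mul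
    (measurable_pushforwardDensity.comp h.quasiMeasurePreserving.measurable)) measurable_const
    fun s hs _ => ?_
  rw [← lintegral_indicator hs, ← lintegral_indicator hs,
    ← h.setLIntegral_pushforwardDensity_mul_comp_mul (measurable_const.indicator hs)]
  congr 1 with y
  by_cases hy : y ∈ s <;> simp [hy]

theorem ae_sqrt_mul_sqrt_eq_one [SigmaFinite μ] (h : IsNonsingularPartialInverse μ f g D R) :
    ∀ᵐ y ∂μ.restrict D,
      √(pushforwardDensity μ g R y).toReal * √(pushforwardDensity μ f D (f y)).toReal = 1 :=
  h.ae_pushforwardDensity_comp_mul_eq_one.mono fun y hy => by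
    rw [← Real.sqrt_mul ENNReal.toReal_nonneg, ← ENNReal.toReal_mul, hy, ENNReal.toReal_one,
      Real.sqrt_one]

end IsNonsingularPartialInverse

theorem enorm_sqrt_toReal_mul_sq {r : ℝ≥0∞} (hr : r ≠ ∞) (z : 𝕜) :
    ‖(√r.toReal : 𝕜) * z‖ₑ ^ 2 = r * ‖z‖ₑ ^ 2 := by
  rw [enorm_mul, mul_pow, ← ofReal_norm (√r.toReal : 𝕜), RCLike.norm_ofReal,
    abs_of_nonneg (Real.sqrt_nonneg _), ← ENNReal.ofReal_pow (Real.sqrt_nonneg _),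
    Real.sq_sqrt ENNReal.toReal_nonneg, ENNReal.ofReal_toReal hr]

/-- With `f = f_e`, `g = f_e⁻¹`, `D = D_{r(e)}`, `R = R_e` this is `S_e`; exchanging the roles of
`f, D` and `g, R` gives `S_e^*`. -/
noncomputable def weightedComp (μ : Measure X) (f g : X → X) (D R : Set X) (φ : X → 𝕜) :
    X → 𝕜 :=
  R.indicator fun x => (√(pushforwardDensity μ f D x).toReal : 𝕜) * φ (g x)

theorem weightedComp_add (φ ψ : X → 𝕜) :
    weightedComp μ f g D R (φ + ψ) = weightedComp μ f g D R φ + weightedComp μ f g D R ψ := by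
  ext x
  by_cases hx : x ∈ R <;> simp [weightedComp, hx, mul_add]

theorem weightedComp_smul (c : 𝕜) (φ : X → 𝕜) :
    weightedComp μ f g D R (c • φ) = c • weightedComp μ f g D R φ := by
  ext x
  by_cases hx : x ∈ R <;> simp [weightedComp, hx, mul_left_comm]

theorem indicator_weightedComp (φ : X → 𝕜) :
    R.indicator (weightedComp μ f g D R φ) = weightedComp μ f g D R φ := by
  simp [weightedComp]

theorem measurable_weightedComp (hg : Measurable g) (hR : MeasurableSet R) {φ : X → 𝕜}
    (hφ : Measurable φ) : Measurable (weightedComp μ f g D R φ) :=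
  ((RCLike.measurable_ofReal.comp measurable_pushforwardDensity.ennreal_toReal.sqrt).mul
    (hφ.comp hg)).indicator hR

namespace IsNonsingularPartialInverse

theorem weightedComp_congr_ae (h : IsNonsingularPartialInverse μ f g D R) {φ ψ : X → 𝕜}
    (hφψ : φ =ᵐ[μ] ψ) : weightedComp μ f g D R φ =ᵐ[μ] weightedComp μ f g D R ψ := by
  have hcomp : ∀ᵐ x ∂μ.restrict R, φ (g x) = ψ (g x) :=
    h.quasiMeasurePreserving_inv.ae (ae_restrict_of_ae hφψ)
  filter_upwards [ae_imp_of_ae_restrict hcomp] with x hx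
  by_cases hxR : x ∈ R <;> simp [weightedComp, hxR, hx]

theorem eLpNorm_weightedComp [SigmaFinite μ] (h : IsNonsingularPartialInverse μ f g D R)
    {φ : X → 𝕜} (hφ : Measurable φ) :
    eLpNorm (weightedComp μ f g D R φ) 2 μ = eLpNorm φ 2 (μ.restrict D) := by
  simp only [eLpNorm_eq_lintegral_rpow_enorm_toReal two_ne_zero ENNReal.ofNat_ne_top,
    ENNReal.toReal_ofNat, ENNReal.rpow_two]
  congr 1
  calc ∫⁻ x, ‖weightedComp μ f g D R φ x‖ₑ ^ 2 ∂μ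
      = ∫⁻ x in R, pushforwardDensity μ f D x * ‖φ (g x)‖ₑ ^ 2 ∂μ := by
        rw [← lintegral_indicator h.measurableSet_target]
        refine lintegral_congr_ae (h.pushforwardDensity_lt_top.mono fun x hx => ?_)
        by_cases hxR : x ∈ R
        · simp only [weightedComp, indicator_of_mem hxR]
          exact enorm_sqrt_toReal_mul_sq hx.ne _
        · simp [weightedComp, hxR]
    _ = ∫⁻ y in D, ‖φ (g (f y))‖ₑ ^ 2 ∂μ :=
        h.setLIntegral_pushforwardDensity_mul
          ((hφ.comp h.quasiMeasurePreserving_inv.measurable).enorm.pow_const 2)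
    _ = ∫⁻ y in D, ‖φ y‖ₑ ^ 2 ∂μ :=
        lintegral_congr_ae (h.left_inv.mono fun y hy => by simp only [hy])

theorem weightedComp_weightedComp [SigmaFinite μ] (h : IsNonsingularPartialInverse μ f g D R)
    (φ : X → 𝕜) :
    weightedComp μ g f R D (weightedComp μ f g D R φ) =ᵐ[μ] D.indicator φ := by
  filter_upwards [ae_imp_of_ae_restrict h.ae_sqrt_mul_sqrt_eq_one,
    ae_imp_of_ae_restrict h.ae_mem_target, ae_imp_of_ae_restrict h.left_inv]
    with y hchain hfy hgf
  by_cases hy : y ∈ D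
  · simp only [weightedComp, indicator_of_mem hy, indicator_of_mem (hfy hy), hgf hy,
      ← mul_assoc, ← RCLike.ofReal_mul, hchain hy, RCLike.ofReal_one, one_mul]
  · simp [weightedComp, hy]

open ComplexConjugate in
theorem integral_conj_weightedComp_mul [SigmaFinite μ] (h : IsNonsingularPartialInverse μ f g D R)
    {φ ψ : X → 𝕜} (hφ : Measurable φ) (hψ : Measurable ψ) :
    ∫ x, conj (weightedComp μ f g D R φ x) * ψ x ∂μ
      = ∫ y, conj (φ y) * weightedComp μ g f R D ψ y ∂μ := by
  set K : X → 𝕜 := fun y => (√(pushforwardDensity μ f D (f y)).toReal : 𝕜) * (conj (φ y) * ψ (f y))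
  have hK : Measurable K :=
    (RCLike.measurable_ofReal.comp ((measurable_pushforwardDensity.comp
      h.quasiMeasurePreserving.measurable).ennreal_toReal.sqrt)).mul
      ((RCLike.continuous_conj.measurable.comp hφ).mul
        (hψ.comp h.quasiMeasurePreserving.measurable))
  calc ∫ x, conj (weightedComp μ f g D R φ x) * ψ x ∂μ = ∫ x in R, K (g x) ∂μ := by
        rw [← integral_indicator h.measurableSet_target]
        refine integral_congr_ae ?_
        filter_upwards [ae_imp_of_ae_restrict h.right_inv] with x hx
        by_cases hxR : x ∈ R
        · simp only [weightedComp, indicator_of_mem hxR, map_mul, RCLike.conj_ofReal, hx hxR, K]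
          ring
        · simp [weightedComp, hxR]
    _ = ∫ y in D, (pushforwardDensity μ g R y).toReal • K y ∂μ :=
        (h.symm.setIntegral_pushforwardDensity_smul hK).symm
    _ = ∫ y in D, conj (φ y) * ((√(pushforwardDensity μ g R y).toReal : 𝕜) * ψ (f y)) ∂μ := by
        refine setIntegral_congr_ae h.measurableSet_source ?_
        filter_upwards [ae_imp_of_ae_restrict h.ae_sqrt_mul_sqrt_eq_one] with y hy hyD
        have hsq := Real.mul_self_sqrt (ENNReal.toReal_nonneg (a := pushforwardDensity μ g R y))
        have hw : (pushforwardDensity μ g R y).toReal * √(pushforwardDensity μ f D (f y)).toReal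
            = √(pushforwardDensity μ g R y).toReal :=
          calc _ = √(pushforwardDensity μ g R y).toReal
                * (√(pushforwardDensity μ g R y).toReal
                  * √(pushforwardDensity μ f D (f y)).toReal) := by rw [← mul_assoc, hsq]
            _ = _ := by rw [hy hyD, mul_one]
        simp only [K, RCLike.real_smul_eq_coe_mul, ← hw]
        push_cast
        ring
    _ = ∫ y, conj (φ y) * weightedComp μ g f R D ψ y ∂μ := by
        rw [← integral_indicator h.measurableSet_source]
        congr 1 with y
        by_cases hy : y ∈ D <;> simp [weightedComp, hy]

section L2

variable [SigmaFinite μ]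

theorem memLp_weightedComp (h : IsNonsingularPartialInverse μ f g D R) (φ : Lp 𝕜 2 μ) :
    MemLp (weightedComp μ f g D R φ) 2 μ := by
  have hφ := (Lp.stronglyMeasurable φ).measurable
  refine ⟨(measurable_weightedComp h.quasiMeasurePreserving_inv.measurable
    h.measurableSet_target hφ).aestronglyMeasurable, ?_⟩
  rw [h.eLpNorm_weightedComp hφ]
  exact (eLpNorm_mono_measure _ Measure.restrict_le_self).trans_lt (Lp.memLp φ).eLpNorm_lt_top

theorem norm_toLp_weightedComp_le (h : IsNonsingularPartialInverse μ f g D R) (φ : Lp 𝕜 2 μ) :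
    ‖(h.memLp_weightedComp φ).toLp _‖ ≤ ‖φ‖ := by
  rw [Lp.norm_toLp, Lp.norm_def, h.eLpNorm_weightedComp (Lp.stronglyMeasurable φ).measurable]
  exact ENNReal.toReal_mono (Lp.eLpNorm_ne_top φ) (eLpNorm_mono_measure _ Measure.restrict_le_self)

noncomputable def weightedCompL (h : IsNonsingularPartialInverse μ f g D R) :
    Lp 𝕜 2 μ →L[𝕜] Lp 𝕜 2 μ :=
  LinearMap.mkContinuous
    { toFun φ := (h.memLp_weightedComp φ).toLp _
      map_add' φ ψ := by
        rw [← MemLp.toLp_add]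
        refine MemLp.toLp_congr _ _ ((h.weightedComp_congr_ae (Lp.coeFn_add φ ψ)).trans ?_)
        rw [weightedComp_add]
      map_smul' c φ := by
        rw [RingHom.id_apply, ← MemLp.toLp_const_smul]
        refine MemLp.toLp_congr _ _ ((h.weightedComp_congr_ae (Lp.coeFn_smul c φ)).trans ?_)
        rw [weightedComp_smul] }
    1 fun φ => (one_mul ‖φ‖).symm ▸ h.norm_toLp_weightedComp_le φ

theorem coeFn_weightedCompL (h : IsNonsingularPartialInverse μ f g D R) (φ : Lp 𝕜 2 μ) :
    ⇑(h.weightedCompL φ) =ᵐ[μ] weightedComp μ f g D R φ :=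
  MemLp.coeFn_toLp (h.memLp_weightedComp φ)

theorem coeFn_weightedCompL_symm_weightedCompL (h : IsNonsingularPartialInverse μ f g D R)
    (φ : Lp 𝕜 2 μ) : ⇑(h.symm.weightedCompL (h.weightedCompL φ)) =ᵐ[μ] D.indicator φ :=
  (h.symm.coeFn_weightedCompL _).trans
    ((h.symm.weightedComp_congr_ae (h.coeFn_weightedCompL φ)).trans (h.weightedComp_weightedComp φ))

open ComplexConjugate InnerProductSpace in
theorem adjoint_weightedCompL (h : IsNonsingularPartialInverse μ f g D R) :
    (h.weightedCompL (𝕜 := 𝕜)).adjoint = h.symm.weightedCompL := by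
  refine ((ContinuousLinearMap.eq_adjoint_iff _ _).mpr fun φ ψ => ?_).symm
  have hφ := (Lp.stronglyMeasurable φ).measurable
  have hψ := (Lp.stronglyMeasurable ψ).measurable
  rw [L2.inner_def, L2.inner_def]
  calc ∫ x, ⟪h.symm.weightedCompL φ x, ψ x⟫_𝕜 ∂μ
      = ∫ x, conj (weightedComp μ g f R D φ x) * ψ x ∂μ := by
        refine integral_congr_ae ?_
        filter_upwards [h.symm.coeFn_weightedCompL φ] with x hx
        rw [hx, RCLike.inner_apply']
    _ = ∫ x, conj (φ x) * weightedComp μ f g D R ψ x ∂μ :=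
        h.symm.integral_conj_weightedComp_mul hφ hψ
    _ = ∫ x, ⟪φ x, h.weightedCompL ψ x⟫_𝕜 ∂μ := by
        refine integral_congr_ae ?_
        filter_upwards [h.coeFn_weightedCompL ψ] with x hx
        rw [hx, RCLike.inner_apply']

theorem weightedCompL_mul_symm_mul (h : IsNonsingularPartialInverse μ f g D R) :
    h.weightedCompL * h.symm.weightedCompL * h.weightedCompL
      = (h.weightedCompL : Lp 𝕜 2 μ →L[𝕜] Lp 𝕜 2 μ) := by
  ext1 φ
  refine Lp.ext ?_
  calc ⇑(h.weightedCompL (h.symm.weightedCompL (h.weightedCompL φ)))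
      =ᵐ[μ] R.indicator (h.weightedCompL φ) :=
        h.symm.coeFn_weightedCompL_symm_weightedCompL _
    _ =ᵐ[μ] R.indicator (weightedComp μ f g D R φ) := (h.coeFn_weightedCompL φ).indicator
    _ = weightedComp μ f g D R φ := indicator_weightedComp _
    _ =ᵐ[μ] h.weightedCompL φ := (h.coeFn_weightedCompL φ).symm

end L2

end IsNonsingularPartialInverse

end MeasureTheory

namespace Ultragraph

theorem BranchingSystem.isNonsingularPartialInverse {V E : Type*} {G : Ultragraph V E}
    {X : Type*} [MeasurableSpace X] {μ : Measure X} (B : BranchingSystem G X μ) (e : E) :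
    IsNonsingularPartialInverse μ (B.f e) (B.finv e) (B.D (G.r e)) (B.R e) :=
  ⟨B.measurableSet_D _ (.range e), B.measurableSet_R e,
    ⟨B.measurable_f e, B.pushforward_finv_ac e⟩, ⟨B.measurable_finv e, B.pushforward_f_ac e⟩,
    B.finv_f e, B.f_finv e⟩

/-- The operator `S_e φ = Φ_{f_e⁻¹}^{1/2}·(φ∘f_e⁻¹)` is a bounded partial isometry on
`L²(X,μ)`, with adjoint `φ ↦ Φ_{f_e}^{1/2}·(φ∘f_e)`; `S_e S_e^*` is multiplication by
`χ_{R_e}` and `S_e^* S_e` is multiplication by `χ_{D_{r(e)}}`. -/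
theorem exists_partial_isometry_of_branchingSystem
    {V E : Type*} {G : Ultragraph V E} {X : Type*} [MeasurableSpace X]
    {μ : Measure X} [SigmaFinite μ] (B : BranchingSystem G X μ) (e : E) :
    ∃ S : Lp ℂ 2 μ →L[ℂ] Lp ℂ 2 μ,
      (∀ φ : Lp ℂ 2 μ, ⇑(S φ) =ᵐ[μ] B.SFun e ⇑φ) ∧
      (∀ φ : Lp ℂ 2 μ, ⇑((ContinuousLinearMap.adjoint S) φ) =ᵐ[μ] B.SStarFun e ⇑φ) ∧
      S * ContinuousLinearMap.adjoint S * S = S ∧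
      (∀ φ : Lp ℂ 2 μ, ⇑((S * ContinuousLinearMap.adjoint S) φ) =ᵐ[μ]
        (B.R e).indicator ⇑φ) ∧
      (∀ φ : Lp ℂ 2 μ, ⇑((ContinuousLinearMap.adjoint S * S) φ) =ᵐ[μ]
        (B.D (G.r e)).indicator ⇑φ) := by
  have h := B.isNonsingularPartialInverse e
  refine ⟨h.weightedCompL, ?_⟩
  rw [h.adjoint_weightedCompL]
  exact ⟨h.coeFn_weightedCompL, h.symm.coeFn_weightedCompL, h.weightedCompL_mul_symm_mul,
    h.symm.coeFn_weightedCompL_symm_weightedCompL, h.coeFn_weightedCompL_symm_weightedCompL⟩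

end Ultragraph
end

section
/- Let {R_e, D_A, f_e} be a G-branching system on a σ-finite measure space (X, μ). Then the family of operators on L²(X, μ) given by P_A(φ) = χ_{D_A}·φ for A ∈ 𝒢⁰ and S_e(φ) = Φ_{f_e⁻¹}^{1/2}·(φ∘f_e⁻¹) for e ∈ 𝒢¹ forms a Cuntz–Krieger G-family: each P_A is a projection with P_∅ = 0, P_A P_B = P_{A∩B}, P_{A∪B} = P_A + P_B − P_{A∩B}; the S_e are partial isometries with mutually orthogonal ranges; S_e* S_e = P_{r(e)}; S_e S_e* ≤ P_{s(e)}; and P_v = Σ_{e∈s⁻¹(v)} S_e S_e* whenever 0 < |s⁻¹(v)| < ∞. -/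
open MeasureTheory Filter Set
open scoped ENNReal

universe u v w

/-!
On `L²(X, μ)` the `P_A` are multiplications by indicators, so their relations are those of the
sets `D_A` up to null sets. Changing variables along `f_e` with the Radon–Nikodym derivative gives
`‖S_e φ‖ = ‖χ_{D_{r(e)}} φ‖`, hence `S_e* S_e = P_{r(e)}` by polarization. As `Φ_{f_e⁻¹}` is a.e.
positive and finite on `R_e`, every `ψ` supported on `R_e` equals
`S_e ((ψ / Φ_{f_e⁻¹}^{1/2}) ∘ f_e)`, so `S_e S_e*` is multiplication by `χ_{R_e}`. Orthogonality
of the ranges, `S_e S_e* ≤ P_{s(e)}` and the Cuntz–Krieger relation then reduce to the a.e.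
relations between the sets `R_e` and `D_A`.
-/

section LiftLp

variable {X 𝕜 E F : Type*} [MeasurableSpace X] {μ : Measure X} {p : ℝ≥0∞} [Fact (1 ≤ p)]
  [NormedField 𝕜] [NormedAddCommGroup E] [NormedSpace 𝕜 E]
  [NormedAddCommGroup F] [NormedSpace 𝕜 F]

noncomputable def LinearMap.liftLp (T : (X → E) →ₗ[𝕜] (X → F))
    (hT : ∀ f g, f =ᵐ[μ] g → T f =ᵐ[μ] T g) (hmem : ∀ φ : Lp E p μ, MemLp (T φ) p μ)
    (hle : ∀ φ : Lp E p μ, eLpNorm (T φ) p μ ≤ eLpNorm φ p μ) :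
    Lp E p μ →L[𝕜] Lp F p μ :=
  LinearMap.mkContinuous
    { toFun := fun φ => (hmem φ).toLp (T φ)
      map_add' := fun φ ψ => by
        rw [← MemLp.toLp_add, MemLp.toLp_eq_toLp_iff, ← map_add]
        exact hT _ _ (Lp.coeFn_add φ ψ)
      map_smul' := fun c φ => by
        rw [RingHom.id_apply, ← MemLp.toLp_const_smul, MemLp.toLp_eq_toLp_iff, ← map_smul]
        exact hT _ _ (Lp.coeFn_smul c φ) }
    1 fun φ => by
      rw [one_mul, LinearMap.coe_mk, AddHom.coe_mk, Lp.norm_toLp, Lp.norm_def]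
      exact ENNReal.toReal_mono (Lp.eLpNorm_ne_top φ) (hle φ)

theorem LinearMap.coeFn_liftLp (T : (X → E) →ₗ[𝕜] (X → F))
    (hT : ∀ f g, f =ᵐ[μ] g → T f =ᵐ[μ] T g) (hmem : ∀ φ : Lp E p μ, MemLp (T φ) p μ)
    (hle : ∀ φ : Lp E p μ, eLpNorm (T φ) p μ ≤ eLpNorm φ p μ) (φ : Lp E p μ) :
    T.liftLp hT hmem hle φ =ᵐ[μ] T φ :=
  (hmem φ).coeFn_toLp

end LiftLp

namespace MeasureTheory.Lp

section NormedSpace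

variable {X : Type*} (𝕜 : Type*) {E : Type*} [MeasurableSpace X] {μ : Measure X} {p : ℝ≥0∞}
  [Fact (1 ≤ p)] [NormedField 𝕜] [NormedAddCommGroup E] [NormedSpace 𝕜 E]

open scoped Classical in
/-- Multiplication by the indicator of `s`; it is `0` (a junk value) when `s` is not measurable. -/
noncomputable def indicatorCLM (s : Set X) : Lp E p μ →L[𝕜] Lp E p μ :=
  if hs : MeasurableSet s then
    LinearMap.liftLp
      { toFun := s.indicator
        map_add' := s.indicator_add'
        map_smul' := s.indicator_const_smul }
      (fun _ _ h => h.indicator) (fun φ => (Lp.memLp φ).indicator hs)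
      (fun _ => eLpNorm_indicator_le _)
  else 0

variable {𝕜} {s t : Set X}

theorem coeFn_indicatorCLM (hs : MeasurableSet s) (φ : Lp E p μ) :
    indicatorCLM 𝕜 s φ =ᵐ[μ] s.indicator φ := by
  rw [indicatorCLM, dif_pos hs]
  exact LinearMap.coeFn_liftLp _ _ _ _ φ

theorem indicatorCLM_congr (hs : MeasurableSet s) (ht : MeasurableSet t) (hst : s =ᵐ[μ] t) :
    (indicatorCLM 𝕜 s : Lp E p μ →L[𝕜] Lp E p μ) = indicatorCLM 𝕜 t :=
  ContinuousLinearMap.ext fun φ => Lp.ext <| (coeFn_indicatorCLM hs φ).trans <|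
    (indicator_ae_eq_of_ae_eq_set hst).trans (coeFn_indicatorCLM ht φ).symm

theorem indicatorCLM_of_measure_eq_zero (hs : μ s = 0) :
    (indicatorCLM 𝕜 s : Lp E p μ →L[𝕜] Lp E p μ) = 0 := by
  by_cases hsm : MeasurableSet s
  · refine ContinuousLinearMap.ext fun φ => Lp.ext ?_
    filter_upwards [coeFn_indicatorCLM (𝕜 := 𝕜) hsm φ, indicator_ae_eq_of_ae_eq_set (f := φ)
      (ae_eq_empty.mpr hs), Lp.coeFn_zero E p μ] with x h₁ h₂ h₃
    simp_all
  · rw [indicatorCLM, dif_neg hsm]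

theorem indicatorCLM_mul (hs : MeasurableSet s) (ht : MeasurableSet t) :
    (indicatorCLM 𝕜 s * indicatorCLM 𝕜 t : Lp E p μ →L[𝕜] Lp E p μ) = indicatorCLM 𝕜 (s ∩ t) := by
  refine ContinuousLinearMap.ext fun φ => Lp.ext ?_
  filter_upwards [coeFn_indicatorCLM (𝕜 := 𝕜) hs (indicatorCLM 𝕜 t φ),
    coeFn_indicatorCLM (𝕜 := 𝕜) ht φ, coeFn_indicatorCLM (𝕜 := 𝕜) (hs.inter ht) φ]
    with x h₁ h₂ h₃
  rw [mul_apply_eq_comp, h₁, h₃, ← indicator_indicator]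
  by_cases hx : x ∈ s <;> simp [hx, h₂]

theorem indicatorCLM_union_add_inter (hs : MeasurableSet s) (ht : MeasurableSet t) :
    (indicatorCLM 𝕜 (s ∪ t) + indicatorCLM 𝕜 (s ∩ t) : Lp E p μ →L[𝕜] Lp E p μ) =
      indicatorCLM 𝕜 s + indicatorCLM 𝕜 t := by
  refine ContinuousLinearMap.ext fun φ => Lp.ext ?_
  filter_upwards [coeFn_indicatorCLM (𝕜 := 𝕜) (hs.union ht) φ,
    coeFn_indicatorCLM (𝕜 := 𝕜) (hs.inter ht) φ, coeFn_indicatorCLM (𝕜 := 𝕜) hs φ,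
    coeFn_indicatorCLM (𝕜 := 𝕜) ht φ, Lp.coeFn_add (indicatorCLM 𝕜 (s ∪ t) φ)
      (indicatorCLM 𝕜 (s ∩ t) φ), Lp.coeFn_add (indicatorCLM 𝕜 s φ) (indicatorCLM 𝕜 t φ)]
    with x h₁ h₂ h₃ h₄ h₅ h₆
  simp only [add_apply, h₅, h₆, Pi.add_apply, h₁, h₂, h₃, h₄]
  exact indicator_union_add_inter_apply _ s t x

theorem indicatorCLM_biUnion {ι : Type*} (F : Finset ι) {s : ι → Set X}
    (hs : ∀ i, MeasurableSet (s i))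
    (hd : (F : Set ι).Pairwise fun i j => AEDisjoint μ (s i) (s j)) :
    (indicatorCLM 𝕜 (⋃ i ∈ F, s i) : Lp E p μ →L[𝕜] Lp E p μ) =
      ∑ i ∈ F, indicatorCLM 𝕜 (s i) := by
  classical
  induction F using Finset.induction_on with
  | empty => simpa using indicatorCLM_of_measure_eq_zero measure_empty
  | insert j F hj ih =>
    rw [Finset.coe_insert, Set.pairwise_insert] at hd
    have hnull : μ (s j ∩ ⋃ i ∈ F, s i) = 0 := by
      rw [inter_iUnion₂]
      exact (measure_biUnion_null_iff F.countable_toSet).mpr fun i hi =>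
        (hd.2 i hi (ne_of_mem_of_not_mem hi hj).symm).1
    rw [Finset.set_biUnion_insert, Finset.sum_insert hj, ← ih hd.1,
      ← indicatorCLM_union_add_inter (hs j) (F.measurableSet_biUnion fun i _ => hs i),
      indicatorCLM_of_measure_eq_zero hnull, add_zero]

end NormedSpace

section InnerProductSpace

variable {X 𝕜 E : Type*} [MeasurableSpace X] {μ : Measure X} [RCLike 𝕜]
  [NormedAddCommGroup E] [InnerProductSpace 𝕜 E] [CompleteSpace E] {s : Set X}

theorem isStarProjection_indicatorCLM (hs : MeasurableSet s) :
    IsStarProjection (indicatorCLM 𝕜 s : Lp E 2 μ →L[𝕜] Lp E 2 μ) := by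
  refine ⟨by rw [IsIdempotentElem, indicatorCLM_mul hs hs, inter_self], ?_⟩
  refine ContinuousLinearMap.isSelfAdjoint_iff_isSymmetric.mpr fun φ ψ => ?_
  rw [L2.inner_def, L2.inner_def]
  refine integral_congr_ae ?_
  filter_upwards [coeFn_indicatorCLM (𝕜 := 𝕜) hs φ, coeFn_indicatorCLM (𝕜 := 𝕜) hs ψ]
    with x hφ hψ
  by_cases hx : x ∈ s <;> simp [hφ, hψ, hx]

end InnerProductSpace

end MeasureTheory.Lp

theorem CStarRing.mul_star_mul_self_of_isIdempotentElem {A : Type*} [NonUnitalNormedRing A]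
    [StarRing A] [CStarRing A] {a : A} (h : IsIdempotentElem (star a * a)) :
    a * (star a * a) = a := by
  have hdefect : star (a * (star a * a) - a) * (a * (star a * a) - a) = 0 := by
    have hcube : star a * a * (star a * a) * (star a * a) = star a * a := by rw [h.eq, h.eq]
    calc star (a * (star a * a) - a) * (a * (star a * a) - a)
        = star a * a * (star a * a) * (star a * a) - star a * a * (star a * a)
          - star a * a * (star a * a) + star a * a := by
          simp only [star_sub, star_mul, star_star]; noncomm_ring
      _ = 0 := by rw [hcube, h.eq]; abel
  exact sub_eq_zero.mp ((CStarRing.star_mul_self_eq_zero_iff _).mp hdefect)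

namespace ContinuousLinearMap

theorem star_mul_self_eq_of_norm_apply_eq {H : Type*} [NormedAddCommGroup H]
    [InnerProductSpace ℂ H] [CompleteSpace H] {T U : H →L[ℂ] H}
    (h : ∀ x, ‖T x‖ = ‖U x‖) : star T * T = star U * U := by
  refine ContinuousLinearMap.coe_injective <| (ext_inner_map _ _).mp fun x => ?_
  change inner ℂ ((star T * T) x) x = inner ℂ ((star U * U) x) x
  rw [mul_apply_eq_comp, mul_apply_eq_comp, star_eq_adjoint, star_eq_adjoint, adjoint_inner_left,
    adjoint_inner_left, inner_self_eq_norm_sq_to_K, inner_self_eq_norm_sq_to_K, h]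

/-- The range projection of a partial isometry `S` is any self-adjoint `M` with `M * S = S`
whose range lies in that of `S`. -/
theorem mul_star_eq_of_forall_exists_apply_eq {𝕜 H : Type*} [RCLike 𝕜] [NormedAddCommGroup H]
    [InnerProductSpace 𝕜 H] [CompleteSpace H] {S M : H →L[𝕜] H}
    (hS : IsIdempotentElem (star S * S)) (hM : IsSelfAdjoint M) (hMS : M * S = S)
    (hrange : ∀ ψ, ∃ φ, S φ = M ψ) : S * star S = M := by
  have hSSS : S * (star S * S) = S := CStarRing.mul_star_mul_self_of_isIdempotentElem hS
  have hleft : S * star S * M = M := ContinuousLinearMap.ext fun ψ => by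
    obtain ⟨φ, hφ⟩ := hrange ψ
    rw [mul_apply_eq_comp, ← hφ, ← mul_apply_eq_comp, mul_assoc, hSSS]
  have hright : S * star S * M = S * star S := by
    rw [mul_assoc, ← hM.star_eq, ← star_mul, hMS]
  rw [← hright, hleft]

end ContinuousLinearMap

namespace Ultragraph.BranchingSystem

open Lp

variable {V E X : Type*} {G : Ultragraph V E} [MeasurableSpace X] {μ : Measure X}
  (B : BranchingSystem G X μ) (e : E)

theorem measurableSet_D_r : MeasurableSet (B.D (G.r e)) := B.measurableSet_D _ (.range e)

theorem indicatorCLM_D_mul {A A' : Set V} (hA : G.InG0 A) (hA' : G.InG0 A') :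
    indicatorCLM ℂ (B.D A) * indicatorCLM ℂ (B.D A') =
      (indicatorCLM ℂ (B.D (A ∩ A')) : Lp ℂ 2 μ →L[ℂ] Lp ℂ 2 μ) := by
  have hD := B.measurableSet_D
  rw [indicatorCLM_mul (hD A hA) (hD A' hA'), indicatorCLM_congr ((hD A hA).inter (hD A' hA'))
    (hD _ (hA.inter hA')) (B.D_inter A A' hA hA')]

theorem indicatorCLM_D_union {A A' : Set V} (hA : G.InG0 A) (hA' : G.InG0 A') :
    (indicatorCLM ℂ (B.D (A ∪ A')) : Lp ℂ 2 μ →L[ℂ] Lp ℂ 2 μ) =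
      indicatorCLM ℂ (B.D A) + indicatorCLM ℂ (B.D A') - indicatorCLM ℂ (B.D (A ∩ A')) := by
  have hD := B.measurableSet_D
  rw [eq_sub_iff_add_eq, ← indicatorCLM_union_add_inter (hD A hA) (hD A' hA'),
    indicatorCLM_congr ((hD A hA).union (hD A' hA')) (hD _ (hA.union hA')) (B.D_union A A' hA hA'),
    indicatorCLM_congr ((hD A hA).inter (hD A' hA')) (hD _ (hA.inter hA')) (B.D_inter A A' hA hA')]

theorem map_f_absolutelyContinuous : (μ.restrict (B.D (G.r e))).map (B.f e) ≪ μ :=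
  (B.pushforward_finv_ac e).trans Measure.restrict_le_self.absolutelyContinuous

theorem ae_map_f_mem_R : ∀ᵐ x ∂(μ.restrict (B.D (G.r e))).map (B.f e), x ∈ B.R e :=
  (B.pushforward_finv_ac e).ae_le (ae_restrict_mem (B.measurableSet_R e))

theorem map_finv_map_f :
    ((μ.restrict (B.D (G.r e))).map (B.f e)).map (B.finv e) = μ.restrict (B.D (G.r e)) := by
  rw [Measure.map_map (B.measurable_finv e) (B.measurable_f e)]
  exact (Measure.map_congr (B.finv_f e)).trans Measure.map_id

theorem restrict_R_absolutelyContinuous :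
    μ.restrict (B.R e) ≪ (μ.restrict (B.D (G.r e))).map (B.f e) := by
  have hid : (μ.restrict (B.R e)).map (B.f e ∘ B.finv e) = μ.restrict (B.R e) :=
    (Measure.map_congr (B.f_finv e)).trans Measure.map_id
  have h := (B.pushforward_f_ac e).map (B.measurable_f e)
  rwa [Measure.map_map (B.measurable_f e) (B.measurable_finv e), hid] at h

instance sigmaFinite_map_f [SigmaFinite μ] :
    SigmaFinite ((μ.restrict (B.D (G.r e))).map (B.f e)) :=
  .of_map _ (B.measurable_finv e).aemeasurable (by rw [map_finv_map_f]; infer_instance)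

theorem measurable_PhiFinv : Measurable (B.PhiFinv e) := Measure.measurable_rnDeriv _ _

theorem ae_PhiFinv_lt_top [SigmaFinite μ] : ∀ᵐ x ∂μ, B.PhiFinv e x < ∞ :=
  Measure.rnDeriv_lt_top _ _

theorem ae_restrict_R_PhiFinv_pos [SigmaFinite μ] :
    ∀ᵐ x ∂μ.restrict (B.R e), 0 < B.PhiFinv e x :=
  (B.restrict_R_absolutelyContinuous e).ae_le
    (Measure.rnDeriv_pos (B.map_f_absolutelyContinuous e))

variable {e}

theorem sFun_add (g h : X → ℂ) : B.SFun e (g + h) = B.SFun e g + B.SFun e h := by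
  ext x
  by_cases hx : x ∈ B.R e <;> simp [SFun, hx, mul_add]

theorem sFun_smul (c : ℂ) (g : X → ℂ) : B.SFun e (c • g) = c • B.SFun e g := by
  ext x
  by_cases hx : x ∈ B.R e <;> simp [SFun, hx, mul_left_comm _ c]

theorem sFun_congr {g h : X → ℂ} (hgh : g =ᵐ[μ] h) : B.SFun e g =ᵐ[μ] B.SFun e h := by
  refine (ae_eq_restrict_iff_indicator_ae_eq (B.measurableSet_R e)).mp ?_
  have hcomp : g ∘ B.finv e =ᵐ[μ.restrict (B.R e)] h ∘ B.finv e :=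
    ae_eq_comp' (B.measurable_finv e).aemeasurable hgh
      ((B.pushforward_f_ac e).trans Measure.restrict_le_self.absolutelyContinuous)
  filter_upwards [hcomp] with x hx
  simp only [Function.comp_apply] at hx
  rw [hx]

theorem measurable_sFun {g : X → ℂ} (hg : Measurable g) : Measurable (B.SFun e g) :=
  ((Complex.measurable_ofReal.comp (B.measurable_PhiFinv e).ennreal_toReal.sqrt).mul
    (hg.comp (B.measurable_finv e))).indicator (B.measurableSet_R e)

theorem lintegral_enorm_sFun_sq [SigmaFinite μ] {g : X → ℂ} (hg : Measurable g) :
    ∫⁻ x, ‖B.SFun e g x‖ₑ ^ 2 ∂μ = ∫⁻ x in B.D (G.r e), ‖g x‖ₑ ^ 2 ∂μ := by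
  have hpt : (fun x => ‖B.SFun e g x‖ₑ ^ 2) =ᵐ[μ]
      (B.R e).indicator fun x => B.PhiFinv e x * ‖g (B.finv e x)‖ₑ ^ 2 := by
    filter_upwards [B.ae_PhiFinv_lt_top e] with x hx
    by_cases hxR : x ∈ B.R e
    · rw [SFun, indicator_of_mem hxR, indicator_of_mem hxR, enorm_mul, mul_pow, ← ofReal_norm,
        Complex.norm_real, Real.norm_of_nonneg (Real.sqrt_nonneg _),
        ← ENNReal.ofReal_pow (Real.sqrt_nonneg _), Real.sq_sqrt ENNReal.toReal_nonneg,
        ENNReal.ofReal_toReal hx.ne]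
    · simp [SFun, hxR]
  have hmeas : Measurable fun x => ‖g (B.finv e x)‖ₑ ^ 2 :=
    (hg.comp (B.measurable_finv e)).enorm.pow_const 2
  rw [lintegral_congr_ae hpt, lintegral_indicator (B.measurableSet_R e), PhiFinv,
    setLIntegral_rnDeriv_mul (B.map_f_absolutelyContinuous e) hmeas.aemeasurable
      (B.measurableSet_R e), Measure.restrict_eq_self_of_ae_mem (B.ae_map_f_mem_R e),
    lintegral_map hmeas (B.measurable_f e)]
  refine lintegral_congr_ae ?_
  filter_upwards [B.finv_f e] with x hx
  rw [hx]

theorem eLpNorm_sFun [SigmaFinite μ] {g : X → ℂ} (hg : Measurable g) :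
    eLpNorm (B.SFun e g) 2 μ = eLpNorm g 2 (μ.restrict (B.D (G.r e))) := by
  simp only [eLpNorm_eq_lintegral_rpow_enorm_toReal two_ne_zero ENNReal.ofNat_ne_top,
    ENNReal.toReal_ofNat, ENNReal.rpow_two, B.lintegral_enorm_sFun_sq hg]

theorem memLp_sFun [SigmaFinite μ] (φ : Lp ℂ 2 μ) : MemLp (B.SFun e φ) 2 μ := by
  refine ⟨(B.measurable_sFun (Lp.stronglyMeasurable φ).measurable).aestronglyMeasurable, ?_⟩
  rw [B.eLpNorm_sFun (Lp.stronglyMeasurable φ).measurable]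
  exact (eLpNorm_mono_measure _ Measure.restrict_le_self).trans_lt (Lp.memLp φ).2

variable (e) in
noncomputable def SOp [SigmaFinite μ] : Lp ℂ 2 μ →L[ℂ] Lp ℂ 2 μ :=
  LinearMap.liftLp ⟨⟨B.SFun e, B.sFun_add⟩, B.sFun_smul⟩ (fun _ _ => B.sFun_congr) B.memLp_sFun
    fun φ => by
      rw [LinearMap.coe_mk, AddHom.coe_mk, B.eLpNorm_sFun (Lp.stronglyMeasurable φ).measurable]
      exact eLpNorm_mono_measure _ Measure.restrict_le_self

variable [SigmaFinite μ]

theorem coeFn_SOp (φ : Lp ℂ 2 μ) : B.SOp e φ =ᵐ[μ] B.SFun e φ :=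
  LinearMap.coeFn_liftLp _ _ _ _ φ

theorem norm_SOp_apply (φ : Lp ℂ 2 μ) :
    ‖B.SOp e φ‖ = ‖indicatorCLM ℂ (B.D (G.r e)) φ‖ := by
  rw [Lp.norm_def, Lp.norm_def, eLpNorm_congr_ae (B.coeFn_SOp φ),
    eLpNorm_congr_ae (coeFn_indicatorCLM (B.measurableSet_D_r e) φ),
    eLpNorm_indicator_eq_eLpNorm_restrict (B.measurableSet_D_r e),
    B.eLpNorm_sFun (Lp.stronglyMeasurable φ).measurable]

theorem star_SOp_mul_SOp : star (B.SOp e) * B.SOp e = indicatorCLM ℂ (B.D (G.r e)) := by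
  have hP := isStarProjection_indicatorCLM (𝕜 := ℂ) (E := ℂ) (μ := μ) (B.measurableSet_D_r e)
  rw [ContinuousLinearMap.star_mul_self_eq_of_norm_apply_eq B.norm_SOp_apply,
    hP.isSelfAdjoint.star_eq, hP.isIdempotentElem.eq]

theorem indicatorCLM_R_mul_SOp : indicatorCLM ℂ (B.R e) * B.SOp e = B.SOp e := by
  refine ContinuousLinearMap.ext fun φ => Lp.ext ?_
  filter_upwards [coeFn_indicatorCLM (𝕜 := ℂ) (B.measurableSet_R e) (B.SOp e φ),
    B.coeFn_SOp φ] with x h₁ h₂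
  rw [mul_apply_eq_comp, h₁, indicator_apply_eq_self]
  intro hx
  rw [h₂, SFun, indicator_of_notMem hx]

theorem exists_SOp_apply_eq (ψ : Lp ℂ 2 μ) :
    ∃ φ, B.SOp e φ = indicatorCLM ℂ (B.R e) ψ := by
  have hR := B.measurableSet_R e
  set g : X → ℂ := (B.D (G.r e)).indicator fun y =>
    ψ (B.f e y) / (Real.sqrt (B.PhiFinv e (B.f e y)).toReal : ℂ) with hg_def
  have hg : Measurable g := by
    refine Measurable.indicator ?_ (B.measurableSet_D_r e)
    exact ((Lp.stronglyMeasurable ψ).measurable.div (Complex.measurable_ofReal.comp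
      (B.measurable_PhiFinv e).ennreal_toReal.sqrt)).comp (B.measurable_f e)
  have hSg : B.SFun e g =ᵐ[μ] (B.R e).indicator ψ := by
    refine (ae_eq_restrict_iff_indicator_ae_eq hR).mp ?_
    filter_upwards [ae_restrict_mem hR, B.f_finv e, ae_restrict_of_ae (B.ae_PhiFinv_lt_top e),
      B.ae_restrict_R_PhiFinv_pos e] with x hxR hfx hlt hpos
    have hsqrt : (Real.sqrt (B.PhiFinv e x).toReal : ℂ) ≠ 0 := by
      exact_mod_cast (Real.sqrt_pos.mpr (ENNReal.toReal_pos hpos.ne' hlt.ne)).ne'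
    simp only [g, indicator_of_mem (B.mapsTo_finv e hxR), hfx]
    field_simp
  have hmem : MemLp g 2 μ := by
    refine ⟨hg.aestronglyMeasurable, ?_⟩
    have hnorm : eLpNorm g 2 μ = eLpNorm (B.SFun e g) 2 μ := by
      rw [B.eLpNorm_sFun hg, ← eLpNorm_indicator_eq_eLpNorm_restrict (B.measurableSet_D_r e),
        hg_def, indicator_indicator, inter_self]
    rw [hnorm, eLpNorm_congr_ae hSg]
    exact (eLpNorm_indicator_le _).trans_lt (Lp.memLp ψ).2
  refine ⟨hmem.toLp g, Lp.ext ?_⟩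
  filter_upwards [B.coeFn_SOp (hmem.toLp g), B.sFun_congr hmem.coeFn_toLp, hSg,
    coeFn_indicatorCLM (𝕜 := ℂ) hR ψ] with x h₁ h₂ h₃ h₄
  rw [h₁, h₂, h₃, h₄]

theorem SOp_mul_star_SOp : B.SOp e * star (B.SOp e) = indicatorCLM ℂ (B.R e) := by
  refine ContinuousLinearMap.mul_star_eq_of_forall_exists_apply_eq ?_
    (isStarProjection_indicatorCLM (B.measurableSet_R e)).isSelfAdjoint
    B.indicatorCLM_R_mul_SOp B.exists_SOp_apply_eq
  rw [IsIdempotentElem, B.star_SOp_mul_SOp, indicatorCLM_mul (B.measurableSet_D_r e)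
    (B.measurableSet_D_r e), inter_self]

theorem star_SOp_mul_SOp_of_ne {e e' : E} (hne : e ≠ e') : star (B.SOp e) * B.SOp e' = 0 := by
  rw [← B.indicatorCLM_R_mul_SOp (e := e), ← B.indicatorCLM_R_mul_SOp (e := e'), star_mul,
    (isStarProjection_indicatorCLM (B.measurableSet_R e)).isSelfAdjoint.star_eq, mul_assoc,
    ← mul_assoc (indicatorCLM ℂ (B.R e)), indicatorCLM_mul (B.measurableSet_R e)
    (B.measurableSet_R e'), indicatorCLM_of_measure_eq_zero (B.ae_disjoint e e' hne), zero_mul,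
    mul_zero]

theorem isPositive_indicatorCLM_D_sub_SOp_mul_star_SOp :
    (indicatorCLM ℂ (B.D {G.s e}) - B.SOp e * star (B.SOp e)).IsPositive := by
  have hD := B.measurableSet_D _ (InG0.singleton (G.s e))
  have hR := B.measurableSet_R e
  have hRD : (B.D {G.s e} ∩ B.R e : Set X) =ᵐ[μ] B.R e := by
    filter_upwards [ae_le_set.mpr (B.R_subset_D e)] with x hx
    exact propext ⟨And.right, fun h => ⟨hx h, h⟩⟩
  rw [B.SOp_mul_star_SOp, ← ContinuousLinearMap.nonneg_iff_isPositive]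
  refine ((isStarProjection_indicatorCLM hR).sub_of_mul_eq_right
    (isStarProjection_indicatorCLM hD) ?_).nonneg
  rw [indicatorCLM_mul hD hR, indicatorCLM_congr (hD.inter hR) hR hRD]

theorem indicatorCLM_D_singleton_eq_sum {v : V} (hfin : {e | G.s e = v}.Finite)
    (hne : {e | G.s e = v}.Nonempty) :
    indicatorCLM ℂ (B.D {v}) = ∑ e ∈ hfin.toFinset, B.SOp e * star (B.SOp e) := by
  simp_rw [B.SOp_mul_star_SOp]
  rw [← indicatorCLM_biUnion _ B.measurableSet_R fun e _ e' _ hne => B.ae_disjoint e e' hne]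
  refine indicatorCLM_congr (B.measurableSet_D _ (InG0.singleton v))
    (hfin.toFinset.measurableSet_biUnion fun e _ => B.measurableSet_R e) ?_
  simpa using B.D_eq_iUnion v hfin hne

end Ultragraph.BranchingSystem

namespace Ultragraph

open Lp

/-- The operators induced by a branching system form a Cuntz–Krieger `G`-family on
`L²(X,μ)`. -/
theorem branchingSystem_induces_CKFamily
    {V E : Type*} {G : Ultragraph V E} {X : Type*} [MeasurableSpace X]
    {μ : Measure X} [SigmaFinite μ] (B : BranchingSystem G X μ) :
    ∃ (P : Set V → (Lp ℂ 2 μ →L[ℂ] Lp ℂ 2 μ)) (S : E → (Lp ℂ 2 μ →L[ℂ] Lp ℂ 2 μ)),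
      (∀ A, G.InG0 A → ∀ φ : Lp ℂ 2 μ, ⇑(P A φ) =ᵐ[μ] (B.D A).indicator ⇑φ) ∧
      (∀ e, ∀ φ : Lp ℂ 2 μ, ⇑(S e φ) =ᵐ[μ] B.SFun e ⇑φ) ∧
      P ∅ = 0 ∧
      (∀ A, G.InG0 A → star (P A) = P A ∧ P A * P A = P A) ∧
      (∀ A A', G.InG0 A → G.InG0 A' → P A * P A' = P (A ∩ A')) ∧
      (∀ A A', G.InG0 A → G.InG0 A' → P (A ∪ A') = P A + P A' - P (A ∩ A')) ∧
      (∀ e, S e * star (S e) * S e = S e) ∧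
      (∀ e e', e ≠ e' → star (S e) * S e' = 0) ∧
      (∀ e, star (S e) * S e = P (G.r e)) ∧
      (∀ e, (P {G.s e} - S e * star (S e)).IsPositive) ∧
      ∀ v, (h : {e | G.s e = v}.Finite) → {e | G.s e = v}.Nonempty →
        P {v} = ∑ e ∈ h.toFinset, S e * star (S e) := by
  have hD := B.measurableSet_D
  refine ⟨fun A => indicatorCLM ℂ (B.D A), fun e => B.SOp e,
    fun A hA => coeFn_indicatorCLM (hD A hA), fun e => B.coeFn_SOp, ?_, fun A hA => ?_,
    fun A A' => B.indicatorCLM_D_mul, fun A A' => B.indicatorCLM_D_union,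
    fun e => by rw [B.SOp_mul_star_SOp, B.indicatorCLM_R_mul_SOp],
    fun e e' => B.star_SOp_mul_SOp_of_ne, fun e => B.star_SOp_mul_SOp,
    fun _ => B.isPositive_indicatorCLM_D_sub_SOp_mul_star_SOp,
    fun v => B.indicatorCLM_D_singleton_eq_sum⟩
  · exact indicatorCLM_of_measure_eq_zero (by rw [B.D_empty, measure_empty])
  · have hP := isStarProjection_indicatorCLM (𝕜 := ℂ) (E := ℂ) (μ := μ) (hD A hA)
    exact ⟨hP.isSelfAdjoint, hP.isIdempotentElem⟩

end Ultragraph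
end

section
/- Every G-branching system {R_e, D_A, f_e} on a σ-finite measure space (X, μ) is nonsingular: there exists a nonsingular measurable map F : X → X such that F restricted to R_e equals f_e⁻¹ μ-almost everywhere, for every edge e. -/
open MeasureTheory Filter Set
open scoped ENNReal

universe u v w

open Function

/-- The pieces are made genuinely disjoint by discarding null sets, and completed by the
identity on the rest of the space; a point can then only land in a null set `S` through a
piece `s i ∩ (φ i)⁻¹' S`, which is null since each `φ i` is nonsingular on `s i`. -/
theorem exists_quasiMeasurePreserving_gluing_of_countable {X ι : Type*} [MeasurableSpace X]
    [Countable ι] {μ : Measure X} {s : ι → Set X} {φ : ι → X → X}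
    (hs : ∀ i, NullMeasurableSet (s i) μ) (hd : Pairwise (AEDisjoint μ on s))
    (hφ : ∀ i, Measure.QuasiMeasurePreserving (φ i) (μ.restrict (s i)) μ) :
    ∃ F : X → X, Measure.QuasiMeasurePreserving F μ μ ∧
      ∀ i, ∀ᵐ x ∂μ.restrict (s i), F x = φ i x := by
  obtain ⟨t, hts, hst, ht, htd⟩ := exists_subordinate_pairwise_disjoint hs hd
  let piece : Option ι → Set X := fun o => o.elim (⋃ i, t i)ᶜ t
  let map : Option ι → X → X := fun o => o.elim id φ
  have hpiece : ∀ o, MeasurableSet (piece o)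
    | none => (MeasurableSet.iUnion ht).compl
    | some i => ht i
  have hmap : ∀ o, Measurable (map o)
    | none => measurable_id
    | some i => (hφ i).measurable
  have hdisj : Pairwise (Disjoint on piece)
    | none, none, h => absurd rfl h
    | none, some i, _ => disjoint_compl_left.mono_right (subset_iUnion t i)
    | some i, none, _ => disjoint_compl_left.mono_right (subset_iUnion t i) |>.symm
    | some i, some j, h => htd fun hij => h (congrArg some hij)
  obtain ⟨F, hFm, hF⟩ := exists_measurable_piecewise piece hpiece map hmap
    fun o o' h => by simp [(hdisj h).inter_eq]
  refine ⟨F, ⟨hFm, Measure.AbsolutelyContinuous.mk fun S hS hS0 => ?_⟩, fun i => ?_⟩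
  · rw [Measure.map_apply hFm hS]
    have hsub : F ⁻¹' S ⊆ (⋃ i, φ i ⁻¹' S ∩ s i) ∪ S := by
      intro x hx
      by_cases hxt : x ∈ ⋃ i, t i
      · obtain ⟨i, hxi⟩ := mem_iUnion.1 hxt
        have hFx : F x = φ i x := hF (some i) hxi
        exact Or.inl (mem_iUnion.2 ⟨i, by rwa [mem_preimage, ← hFx], hts i hxi⟩)
      · exact Or.inr (by rwa [mem_preimage, hF none hxt] at hx)
    refine measure_mono_null hsub (measure_union_null (measure_iUnion_null fun i => ?_) hS0)
    rw [← Measure.restrict_apply ((hφ i).measurable hS)]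
    exact (hφ i).preimage_null hS0
  · rw [Measure.restrict_congr_set (hst i)]
    exact ae_restrict_of_forall_mem (ht i) fun x hx => hF (some i) hx

/-- By s-finiteness only countably many pieces have positive measure; the others are null
and impose nothing. -/
theorem exists_quasiMeasurePreserving_gluing {X ι : Type*} [MeasurableSpace X]
    {μ : Measure X} [SFinite μ] {s : ι → Set X} {φ : ι → X → X}
    (hs : ∀ i, NullMeasurableSet (s i) μ) (hd : Pairwise (AEDisjoint μ on s))
    (hφ : ∀ i, Measure.QuasiMeasurePreserving (φ i) (μ.restrict (s i)) μ) :
    ∃ F : X → X, Measure.QuasiMeasurePreserving F μ μ ∧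
      ∀ i, ∀ᵐ x ∂μ.restrict (s i), F x = φ i x := by
  set P := {i | 0 < μ (s i)}
  have : Countable P := (Measure.countable_meas_pos_of_disjoint_iUnion₀ hs hd).to_subtype
  obtain ⟨F, hF, hFs⟩ := exists_quasiMeasurePreserving_gluing_of_countable
    (s := fun i : P => s i) (φ := fun i : P => φ i) (fun i => hs i)
    (fun i j hij => hd (Subtype.coe_injective.ne hij)) fun i => hφ i
  refine ⟨F, hF, fun i => ?_⟩
  by_cases hi : 0 < μ (s i)
  · exact hFs ⟨i, hi⟩
  · rw [Measure.restrict_eq_zero.2 (nonpos_iff_eq_zero.1 (not_lt.1 hi)), ae_zero]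
    exact eventually_bot

namespace Ultragraph

theorem BranchingSystem.quasiMeasurePreserving_finv {V E X : Type*} {G : Ultragraph V E}
    [MeasurableSpace X] {μ : Measure X} (B : BranchingSystem G X μ) (e : E) :
    Measure.QuasiMeasurePreserving (B.finv e) (μ.restrict (B.R e)) μ :=
  ⟨B.measurable_finv e,
    (B.pushforward_f_ac e).trans (Measure.absolutelyContinuous_of_le Measure.restrict_le_self)⟩

/-- Every branching system is nonsingular: there is a nonsingular measurable map `F`
agreeing with `f_e⁻¹` a.e. on each `R_e`. -/
theorem branchingSystem_nonsingular
    {V E : Type*} {G : Ultragraph V E} {X : Type*} [MeasurableSpace X]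
    {μ : Measure X} [SigmaFinite μ] (B : BranchingSystem G X μ) :
    ∃ F : X → X, Measurable F ∧
      (∀ S : Set X, MeasurableSet S → μ S = 0 → μ (F ⁻¹' S) = 0) ∧
      ∀ e, ∀ᵐ x ∂μ.restrict (B.R e), F x = B.finv e x := by
  obtain ⟨F, hF, hFR⟩ := exists_quasiMeasurePreserving_gluing
    (fun e => (B.measurableSet_R e).nullMeasurableSet) B.ae_disjoint
    B.quasiMeasurePreserving_finv
  exact ⟨F, hF.measurable, fun _ _ hS0 => hF.preimage_null hS0, hFR⟩

end Ultragraph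
end

section
/- With the hypotheses of the previous statement, if φ ∈ L²(X, μ) has support contained μ-a.e. in the countable union ⋃_{i=1}^∞ R_{e_i}, then P_F(φ²) = lim_{n→∞} Σ_{i=1}^{n} (Φ_{f_{e_i}}^{1/2}·(φ∘f_{e_i}))² with convergence in the L¹(X, μ) norm. -/
open MeasureTheory Filter Set
open scoped ENNReal

universe u v w

/-
On `R_e` the map `F` is `f_e⁻¹`, so the change of variables `y = f_e x`, whose Jacobian is
`Φ_{f_e}`, gives `∫_S (S_e^* φ)² = ∫_{F⁻¹(S) ∩ R_e} φ²` for every measurable `S`. Summing over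
the a.e. disjoint sets `R_{e_i}`, which carry `φ`, yields
`∫_S Σ_i (S_{e_i}^* φ)² = ∫_{F⁻¹(S)} φ² = ∫_S P_F(φ²)`, so `P_F(φ²)` is a.e. the pointwise sum of
the nonnegative series `Σ_i (S_{e_i}^* φ)²`. Dominated convergence, with `P_F(φ²)` as the bound,
turns this into convergence of the partial sums in `L¹`.
-/

section

variable {X : Type*} [MeasurableSpace X] {μ : Measure X}

theorem hasSum_toReal_tsum_ofReal {ι : Type*} {g : ι → ℝ} (hg : ∀ i, 0 ≤ g i)
    (hfin : ∑' i, ENNReal.ofReal (g i) ≠ ∞) :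
    HasSum g (∑' i, ENNReal.ofReal (g i)).toReal := by
  have hsum := ENNReal.hasSum_toReal hfin
  rw [← ENNReal.tsum_toReal_eq fun _ => ENNReal.ofReal_ne_top] at hsum
  simpa only [ENNReal.toReal_ofReal (hg _)] using hsum

theorem tendsto_integral_abs_sub_sum_range_of_hasSum {g : ℕ → X → ℝ} {p : X → ℝ}
    (hg : ∀ i, AEStronglyMeasurable (g i) μ) (hg0 : ∀ i x, 0 ≤ g i x) (hp : Integrable p μ)
    (hsum : ∀ᵐ x ∂μ, HasSum (fun i => g i x) (p x)) :
    Tendsto (fun N => ∫ x, |p x - ∑ i ∈ Finset.range N, g i x| ∂μ) atTop (nhds 0) := by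
  have hlim : ∫ x, |p x - p x| ∂μ = 0 := by simp
  rw [← hlim]
  refine tendsto_integral_of_dominated_convergence p (fun N => ?_) hp (fun N => ?_) ?_
  · exact (hp.1.sub (Finset.aestronglyMeasurable_fun_sum _ fun i _ => hg i)).norm
  · filter_upwards [hsum] with x hx
    have hpartial : ∑ i ∈ Finset.range N, g i x ≤ p x :=
      sum_le_hasSum _ (fun i _ => hg0 i x) hx
    rw [Real.norm_eq_abs, abs_abs, abs_of_nonneg (sub_nonneg.2 hpartial)]
    exact sub_le_self _ (Finset.sum_nonneg fun i _ => hg0 i x)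
  · filter_upwards [hsum] with x hx
    exact (tendsto_const_nhds.sub hx.tendsto_sum_nat).abs

theorem ae_eq_toReal_of_forall_setIntegral_eq [SigmaFinite μ] {p : X → ℝ} {G : X → ℝ≥0∞}
    (hp : Integrable p μ) (hG : AEMeasurable G μ) (hGfin : ∫⁻ x, G x ∂μ ≠ ∞)
    (h : ∀ S, MeasurableSet S → ∫ x in S, p x ∂μ = (∫⁻ x in S, G x ∂μ).toReal) :
    p =ᵐ[μ] fun x => (G x).toReal := by
  have hGint : Integrable (fun x => (G x).toReal) μ :=
    integrable_toReal_of_lintegral_ne_top hG hGfin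
  refine ae_eq_of_forall_setIntegral_eq_of_sigmaFinite (fun _ _ _ => hp.integrableOn)
    (fun _ _ _ => hGint.integrableOn) fun S hS _ => ?_
  rw [h S hS, integral_toReal hG.restrict (ae_restrict_of_ae (ae_lt_top' hG hGfin))]

theorem lintegral_eq_tsum_setLIntegral_of_ae_mem_iUnion {ι : Type*} [Countable ι] {A : ι → Set X}
    (hA : ∀ i, MeasurableSet (A i)) (hd : Pairwise fun i j => AEDisjoint μ (A i) (A j))
    {q : X → ℝ≥0∞} (hq : ∀ᵐ x ∂μ, q x ≠ 0 → x ∈ ⋃ i, A i) :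
    ∫⁻ x, q x ∂μ = ∑' i, ∫⁻ x in A i, q x ∂μ := by
  have hq' : q =ᵐ[μ] (⋃ i, A i).indicator q := by
    filter_upwards [hq] with x hx
    by_cases hxA : x ∈ ⋃ i, A i
    · rw [indicator_of_mem hxA]
    · rw [indicator_of_notMem hxA, not_imp_comm.1 hx hxA]
  rw [lintegral_congr_ae hq', lintegral_indicator (MeasurableSet.iUnion hA),
    lintegral_iUnion₀ (fun i => (hA i).nullMeasurableSet) hd]

end

namespace Ultragraph.BranchingSystem

variable {V E X : Type*} {G : Ultragraph V E} [MeasurableSpace X] {μ : Measure X}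
  (B : BranchingSystem G X μ) (e : E)

noncomputable def SStarFunReal (φ : X → ℝ) : X → ℝ :=
  (B.D (G.r e)).indicator fun y => Real.sqrt ((B.PhiF e y).toReal) * φ (B.f e y)

/-- `f_e` pulls back a σ-finite exhaustion of `μ` to one of `(μ|_{R_e}) ∘ f_e⁻¹`. -/
theorem sigmaFinite_map_finv [SigmaFinite μ] :
    SigmaFinite ((μ.restrict (B.R e)).map (B.finv e)) := by
  refine ⟨⟨⟨fun n => B.f e ⁻¹' spanningSets μ n, fun _ => mem_univ _, fun n => ?_, ?_⟩⟩⟩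
  · rw [Measure.map_apply (B.measurable_finv e)
      ((B.measurable_f e) (measurableSet_spanningSets μ n))]
    have hpre : (B.finv e ⁻¹' (B.f e ⁻¹' spanningSets μ n) : Set X)
        =ᵐ[μ.restrict (B.R e)] (spanningSets μ n : Set X) := by
      rw [eventuallyEq_set]
      filter_upwards [B.f_finv e] with x hx
      simp [hx]
    rw [measure_congr hpre, Measure.restrict_apply (measurableSet_spanningSets μ n)]
    exact (measure_mono inter_subset_left).trans_lt (measure_spanningSets_lt_top μ n)
  · rw [← preimage_iUnion, iUnion_spanningSets, preimage_univ]

theorem lintegral_PhiF_mul [SigmaFinite μ] {h : X → ℝ≥0∞} (hh : Measurable h) :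
    ∫⁻ x, B.PhiF e x * h x ∂μ = ∫⁻ x in B.R e, h (B.finv e x) ∂μ := by
  have := B.sigmaFinite_map_finv e
  have hac : (μ.restrict (B.R e)).map (B.finv e) ≪ μ :=
    (B.pushforward_f_ac e).trans (Measure.absolutelyContinuous_of_le Measure.restrict_le_self)
  rw [PhiF, lintegral_rnDeriv_mul hac hh.aemeasurable,
    lintegral_map hh (B.measurable_finv e)]

theorem measurable_SStarFunReal {φ : X → ℝ} (hφ : Measurable φ) :
    Measurable (B.SStarFunReal e φ) :=
  ((Real.continuous_sqrt.measurable.comp (Measure.measurable_rnDeriv _ _).ennreal_toReal).mul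
    (hφ.comp (B.measurable_f e))).indicator (B.measurableSet_D _ (InG0.range e))

theorem ofReal_sq_SStarFunReal_ae_eq [SigmaFinite μ] (φ : X → ℝ) :
    (fun x => ENNReal.ofReal (B.SStarFunReal e φ x ^ 2)) =ᵐ[μ]
      fun x => B.PhiF e x *
        (B.D (G.r e)).indicator (fun y => ENNReal.ofReal (φ (B.f e y) ^ 2)) x := by
  have := B.sigmaFinite_map_finv e
  filter_upwards [Measure.rnDeriv_lt_top ((μ.restrict (B.R e)).map (B.finv e)) μ]
    with x (hx : B.PhiF e x < ∞)
  by_cases hxD : x ∈ B.D (G.r e)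
  · rw [SStarFunReal, indicator_of_mem hxD, indicator_of_mem hxD, mul_pow,
      Real.sq_sqrt ENNReal.toReal_nonneg, ENNReal.ofReal_mul ENNReal.toReal_nonneg,
      ENNReal.ofReal_toReal hx.ne]
  · simp [SStarFunReal, indicator_of_notMem hxD]

theorem setLIntegral_sq_SStarFunReal [SigmaFinite μ] {F : X → X} (hF : Measurable F)
    (hFR : ∀ᵐ x ∂μ.restrict (B.R e), F x = B.finv e x) {φ : X → ℝ} (hφ : Measurable φ)
    {S : Set X} (hS : MeasurableSet S) :
    ∫⁻ x in S, ENNReal.ofReal (B.SStarFunReal e φ x ^ 2) ∂μ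
      = ∫⁻ x in F ⁻¹' S ∩ B.R e, ENNReal.ofReal (φ x ^ 2) ∂μ := by
  set h : X → ℝ≥0∞ := (B.D (G.r e)).indicator fun y => ENNReal.ofReal (φ (B.f e y) ^ 2)
  have hh : Measurable h :=
    ((hφ.comp (B.measurable_f e)).pow_const 2).ennreal_ofReal.indicator
      (B.measurableSet_D _ (InG0.range e))
  have hpull : ∀ᵐ x ∂μ, x ∈ B.R e →
      S.indicator h (B.finv e x) =
        (F ⁻¹' S).indicator (fun y => ENNReal.ofReal (φ y ^ 2)) x := by
    filter_upwards [ae_imp_of_ae_restrict (B.f_finv e), ae_imp_of_ae_restrict hFR]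
      with x hfx hFx hxR
    have hxD : B.finv e x ∈ B.D (G.r e) := B.mapsTo_finv e hxR
    classical
    rw [indicator_apply, indicator_apply, mem_preimage, hFx hxR]
    simp [h, hxD, hfx hxR]
  calc ∫⁻ x in S, ENNReal.ofReal (B.SStarFunReal e φ x ^ 2) ∂μ
      = ∫⁻ x in S, B.PhiF e x * h x ∂μ :=
        lintegral_congr_ae (ae_restrict_of_ae (B.ofReal_sq_SStarFunReal_ae_eq e φ))
    _ = ∫⁻ x, B.PhiF e x * S.indicator h x ∂μ := by
        rw [← lintegral_indicator hS]
        simp_rw [indicator_mul_right]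
    _ = ∫⁻ x in B.R e, S.indicator h (B.finv e x) ∂μ :=
        B.lintegral_PhiF_mul e (hh.indicator hS)
    _ = ∫⁻ x in B.R e, (F ⁻¹' S).indicator (fun y => ENNReal.ofReal (φ y ^ 2)) x ∂μ :=
        setLIntegral_congr_fun_ae (B.measurableSet_R e) hpull
    _ = ∫⁻ x in F ⁻¹' S ∩ B.R e, ENNReal.ofReal (φ x ^ 2) ∂μ := by
        rw [lintegral_indicator (hF hS), Measure.restrict_restrict (hF hS)]

theorem setLIntegral_tsum_sq_SStarFunReal [SigmaFinite μ] {F : X → X} (hF : Measurable F)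
    {es : ℕ → E} (hFR : ∀ i, ∀ᵐ x ∂μ.restrict (B.R (es i)), F x = B.finv (es i) x)
    (hinj : Function.Injective es) {φ : X → ℝ} (hφ : Measurable φ)
    (hsupp : ∀ᵐ x ∂μ, φ x ≠ 0 → x ∈ ⋃ i, B.R (es i)) {S : Set X} (hS : MeasurableSet S) :
    ∫⁻ x in S, ∑' i, ENNReal.ofReal (B.SStarFunReal (es i) φ x ^ 2) ∂μ
      = ∫⁻ x in F ⁻¹' S, ENNReal.ofReal (φ x ^ 2) ∂μ := by
  have hsupp' : ∀ᵐ x ∂μ.restrict (F ⁻¹' S),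
      ENNReal.ofReal (φ x ^ 2) ≠ 0 → x ∈ ⋃ i, B.R (es i) := by
    filter_upwards [ae_restrict_of_ae hsupp] with x hx hne
    exact hx fun h0 => hne (by simp [h0])
  have hd : Pairwise fun i j => AEDisjoint (μ.restrict (F ⁻¹' S)) (B.R (es i)) (B.R (es j)) :=
    fun i j hij => Measure.absolutelyContinuous_of_le Measure.restrict_le_self
      (B.ae_disjoint _ _ (hinj.ne hij))
  rw [lintegral_tsum fun i =>
      ((B.measurable_SStarFunReal (es i) hφ).pow_const 2).ennreal_ofReal.aemeasurable,
    lintegral_eq_tsum_setLIntegral_of_ae_mem_iUnion (fun i => B.measurableSet_R _) hd hsupp']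
  refine tsum_congr fun i => ?_
  rw [B.setLIntegral_sq_SStarFunReal (es i) hF (hFR i) hφ hS,
    Measure.restrict_restrict (B.measurableSet_R _), inter_comm]

end Ultragraph.BranchingSystem

namespace Ultragraph

theorem perronFrobenius_of_countable_support_general
    {V E : Type*} {G : Ultragraph V E} {X : Type*} [MeasurableSpace X]
    {μ : Measure X} [SigmaFinite μ] (B : BranchingSystem G X μ)
    (F : X → X) (hF : Measurable F)
    (hFR : ∀ e, ∀ᵐ x ∂μ.restrict (B.R e), F x = B.finv e x)
    (PF : Lp ℝ 1 μ →L[ℝ] Lp ℝ 1 μ)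
    (hPF : ∀ (ψ : Lp ℝ 1 μ) (S : Set X), MeasurableSet S →
      ∫ x in S, (PF ψ) x ∂μ = ∫ x in F ⁻¹' S, ψ x ∂μ)
    (es : ℕ → E) (hinj : Function.Injective es) (φ : Lp ℝ 2 μ)
    (hsupp : ∀ᵐ x ∂μ, φ x ≠ 0 → x ∈ ⋃ i, B.R (es i))
    (φsq : Lp ℝ 1 μ) (hφsq : ⇑φsq =ᵐ[μ] fun x => (φ x) ^ 2) :
    Filter.Tendsto (fun N : ℕ =>
        ∫ x, |(PF φsq) x - ∑ i ∈ Finset.range N,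
          ((B.D (G.r (es i))).indicator
            (fun y => Real.sqrt ((B.PhiF (es i) y).toReal) * φ (B.f (es i) y)) x) ^ 2| ∂μ)
      Filter.atTop (nhds 0) := by
  have hφ : Measurable φ := (Lp.stronglyMeasurable φ).measurable
  set ψ : ℕ → X → ℝ := fun i => B.SStarFunReal (es i) φ
  have hψ : ∀ i, Measurable (ψ i) := fun i => B.measurable_SStarFunReal (es i) hφ
  set Gsum : X → ℝ≥0∞ := fun x => ∑' i, ENNReal.ofReal (ψ i x ^ 2)
  have hGsum : Measurable Gsum :=
    Measurable.tsum fun i => ((hψ i).pow_const 2).ennreal_ofReal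
  have hchange : ∀ S, MeasurableSet S →
      ∫⁻ x in S, Gsum x ∂μ = ∫⁻ x in F ⁻¹' S, ENNReal.ofReal (φ x ^ 2) ∂μ :=
    fun S => B.setLIntegral_tsum_sq_SStarFunReal hF (fun i => hFR (es i)) hinj hφ hsupp
  have hsq : Integrable (fun x => φ x ^ 2) μ := (L1.integrable_coeFn φsq).congr hφsq
  have hsetIntegral : ∀ S, MeasurableSet S →
      ∫ x in S, (PF φsq) x ∂μ = (∫⁻ x in S, Gsum x ∂μ).toReal := by
    intro S hS
    rw [hPF φsq S hS, integral_congr_ae (ae_restrict_of_ae hφsq),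
      hchange S hS,
      integral_eq_lintegral_of_nonneg_ae (ae_of_all _ fun x => sq_nonneg _)
        (hφ.pow_const 2).aestronglyMeasurable.restrict]
  have hGsum_fin : ∫⁻ x, Gsum x ∂μ ≠ ∞ := by
    rw [← setLIntegral_univ, hchange univ MeasurableSet.univ, preimage_univ, setLIntegral_univ]
    exact (hasFiniteIntegral_iff_ofReal (ae_of_all _ fun x => sq_nonneg _)).1 hsq.2 |>.ne
  have hPF_eq := ae_eq_toReal_of_forall_setIntegral_eq (L1.integrable_coeFn (PF φsq))
    hGsum.aemeasurable hGsum_fin hsetIntegral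
  refine tendsto_integral_abs_sub_sum_range_of_hasSum
    (fun i => ((hψ i).pow_const 2).aestronglyMeasurable) (fun i x => sq_nonneg _)
    (L1.integrable_coeFn _) ?_
  filter_upwards [hPF_eq, ae_lt_top hGsum hGsum_fin] with x hx hfin
  rw [hx]
  exact hasSum_toReal_tsum_ofReal (fun i => sq_nonneg (ψ i x)) hfin.ne

/-- The Perron–Frobenius operator in terms of the branching system: countably supported
case, with convergence in the `L¹`-norm. -/
theorem perronFrobenius_of_countable_support
    {V E : Type*} {G : Ultragraph V E} {X : Type*} [MeasurableSpace X]
    {μ : Measure X} [SigmaFinite μ] (B : BranchingSystem G X μ)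
    (F : X → X) (hF : Measurable F)
    (hns : ∀ S : Set X, MeasurableSet S → μ S = 0 → μ (F ⁻¹' S) = 0)
    (hFR : ∀ e, ∀ᵐ x ∂μ.restrict (B.R e), F x = B.finv e x)
    (PF : Lp ℝ 1 μ →L[ℝ] Lp ℝ 1 μ)
    (hPF : ∀ (ψ : Lp ℝ 1 μ) (S : Set X), MeasurableSet S →
      ∫ x in S, (PF ψ) x ∂μ = ∫ x in F ⁻¹' S, ψ x ∂μ)
    (es : ℕ → E) (hinj : Function.Injective es) (φ : Lp ℝ 2 μ)
    (hsupp : ∀ᵐ x ∂μ, φ x ≠ 0 → x ∈ ⋃ i, B.R (es i))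
    (φsq : Lp ℝ 1 μ) (hφsq : ⇑φsq =ᵐ[μ] fun x => (φ x) ^ 2) :
    Filter.Tendsto (fun N : ℕ =>
        ∫ x, |(PF φsq) x - ∑ i ∈ Finset.range N,
          ((B.D (G.r (es i))).indicator
            (fun y => Real.sqrt ((B.PhiF (es i) y).toReal) * φ (B.f (es i) y)) x) ^ 2| ∂μ)
      Filter.atTop (nhds 0) :=
  perronFrobenius_of_countable_support_general B F hF hFR PF hPF es hinj φ hsupp φsq hφsq

end Ultragraph
end

section
/- Let π : C*(G) → B(H) be a permutative representation of an ultragraph C*-algebra with distinguished orthonormal bases B, B_v, B_{r(e)}, B_e. For A ∈ 𝒢⁰ written as A = (⋂_{e∈X₁} r(e)) ∪ ⋯ ∪ (⋂_{e∈Xₙ} r(e)) ∪ F, the set B_A := (⋂_{e∈X₁} B_{r(e)}) ∪ ⋯ ∪ (⋂_{e∈Xₙ} B_{r(e)}) ∪ ⋃_{v∈F} B_v is independent of the chosen decomposition of A, is an orthonormal basis of H_A = π(p_A)(H), and satisfies B_A ∩ B_C = B_{A∩C} and B_A ∪ B_C = B_{A∪C} for all A, C ∈ 𝒢⁰. -/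
open MeasureTheory Filter Set
open scoped ENNReal

universe u v w

/-- `T` is an orthonormal basis of (the closed subspace generated by) `K`. -/
def IsONBasisOf {H : Type*} [NormedAddCommGroup H] [InnerProductSpace ℂ H]
    (T : Set H) (K : Set H) : Prop :=
  T ⊆ K ∧ Orthonormal ℂ (Subtype.val : T → H) ∧
    closure (↑(Submodule.span ℂ T) : Set H) = closure K

/-!
The paper's `B_A` is `B ∩ {x | p_A x = x}`. The key property is that every `p_A` fixes or kills
each vector of `B`. For `p_{v}` and `p_{r(e)}` this holds because `B_v`, `B_{r(e)} ⊆ B` are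
orthonormal bases of their ranges, so the remaining vectors of `B` are orthogonal to those
ranges; and it passes from `p`, `q` to `p q` and `p + q - p q`, that is, to `p_{A ∩ C}` and
`p_{A ∪ C}`. Since `B` spans `H` densely, the vectors of `B` fixed by such a projection span its
range densely. A nonzero vector that `p` and `q` fix or kill is fixed by `p q` iff it is fixed by
both, and by `p + q - p q` iff it is fixed by one of them, which gives the lattice identities;
the formula for a decomposition of `A` follows from them because `B_v` and `B_{r(e)}` are
recovered as the fixed vectors of `p_{v}` and `p_{r(e)}`.
-/

section FixesOrKills

variable {H : Type*} [NormedAddCommGroup H] [InnerProductSpace ℂ H]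

def FixesOrKills (p : H →L[ℂ] H) (B : Set H) : Prop :=
  ∀ b ∈ B, p b = b ∨ p b = 0

variable {p q : H →L[ℂ] H} {B : Set H}

theorem FixesOrKills.mul (hp : FixesOrKills p B) (hq : FixesOrKills q B) :
    FixesOrKills (p * q) B := by
  intro b hb
  rcases hq b hb with h | h <;> simp [h, hp b hb]

theorem FixesOrKills.add_sub_mul (hp : FixesOrKills p B) (hq : FixesOrKills q B) :
    FixesOrKills (p + q - p * q) B := by
  intro b hb
  rcases hp b hb with h | h <;> rcases hq b hb with h' | h' <;> simp [h, h']

theorem FixesOrKills.inter_fixedPoints_mul (h0 : (0 : H) ∉ B) (hp : FixesOrKills p B)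
    (hq : FixesOrKills q B) :
    B ∩ {x | (p * q) x = x} = (B ∩ {x | p x = x}) ∩ (B ∩ {x | q x = x}) := by
  ext b
  by_cases hb : b ∈ B
  · have hb0 : b ≠ 0 := fun h => h0 (h ▸ hb)
    rcases hp b hb with h | h <;> rcases hq b hb with h' | h' <;>
      simp [hb, h, h', hb0, eq_comm (a := (0 : H))]
  · simp [hb]

theorem FixesOrKills.inter_fixedPoints_add_sub_mul (h0 : (0 : H) ∉ B)
    (hp : FixesOrKills p B) (hq : FixesOrKills q B) :
    B ∩ {x | (p + q - p * q) x = x} = (B ∩ {x | p x = x}) ∪ (B ∩ {x | q x = x}) := by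
  ext b
  by_cases hb : b ∈ B
  · have hb0 : b ≠ 0 := fun h => h0 (h ▸ hb)
    rcases hp b hb with h | h <;> rcases hq b hb with h' | h' <;>
      simp [hb, h, h', hb0, eq_comm (a := (0 : H))]
  · simp [hb]

theorem isONBasisOf_inter_fixedPoints (hB : IsONBasisOf B univ) (hp : FixesOrKills p B) :
    IsONBasisOf (B ∩ {x | p x = x}) (range p) := by
  refine ⟨fun x hx => ⟨x, hx.2⟩, hB.2.1.comp _ (inclusion_injective inter_subset_left),
    subset_antisymm (closure_mono ?_) (closure_minimal ?_ isClosed_closure)⟩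
  · exact Submodule.span_le (p := p.range) |>.2 fun y hy => ⟨y, hy.2⟩
  · rintro _ ⟨y, rfl⟩
    have hy : y ∈ closure (Submodule.span ℂ B : Set H) := by rw [hB.2.2, closure_univ]; trivial
    have hspan : Submodule.span ℂ B ≤
        (Submodule.span ℂ (B ∩ {x | p x = x})).comap (p : H →ₗ[ℂ] H) :=
      Submodule.span_le.2 fun b hb => by
        rcases hp b hb with h | h
        · simpa [h] using Submodule.subset_span (show b ∈ B ∩ {x | p x = x} from ⟨hb, h⟩)
        · simp [h]
    have hsub : (Submodule.span ℂ B : Set H) ⊆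
        p ⁻¹' closure (Submodule.span ℂ (B ∩ {x | p x = x})) := fun x hx =>
      subset_closure (hspan hx)
    exact closure_minimal hsub (isClosed_closure.preimage p.continuous) hy

variable [CompleteSpace H]

theorem apply_eq_zero_of_isONBasisOf_range {T : Set H}
    (hB : Orthonormal ℂ (Subtype.val : B → H)) (hp : IsStarProjection p) (hTB : T ⊆ B)
    (hT : IsONBasisOf T (range p)) {b : H} (hb : b ∈ B) (hbT : b ∉ T) : p b = 0 := by
  obtain ⟨_, hp_eq⟩ := isStarProjection_iff_eq_starProjection_range.mp hp
  have hTb : T ⊆ (ℂ ∙ b)ᗮ := fun t ht => Submodule.mem_orthogonal_singleton_iff_inner_left.2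
    (hB.2 (i := ⟨t, hTB ht⟩) (j := ⟨b, hb⟩) fun h => hbT (Subtype.mk.inj h ▸ ht))
  have hrange : range p ⊆ (ℂ ∙ b)ᗮ :=
    subset_closure.trans (hT.2.2.symm.subset.trans
      (closure_minimal (Submodule.span_le.2 hTb) (Submodule.isClosed_orthogonal _)))
  calc p b = p.range.starProjection b := congrArg (· b) hp_eq
    _ = 0 := (Submodule.starProjection_apply_eq_zero_iff _).2 fun u hu =>
      Submodule.mem_orthogonal_singleton_iff_inner_left.1 (hrange hu)

theorem eq_inter_fixedPoints_of_isONBasisOf_range {T : Set H}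
    (hB : Orthonormal ℂ (Subtype.val : B → H)) (hp : IsStarProjection p) (hTB : T ⊆ B)
    (hT : IsONBasisOf T (range p)) : T = B ∩ {x | p x = x} := by
  ext b
  refine ⟨fun hbT => ⟨hTB hbT, ?_⟩, ?_⟩
  · obtain ⟨y, rfl⟩ := hT.1 hbT
    exact DFunLike.congr_fun hp.isIdempotentElem y
  rintro ⟨hb, hpb : p b = b⟩
  by_contra hbT
  rw [apply_eq_zero_of_isONBasisOf_range hB hp hTB hT hb hbT] at hpb
  exact hB.ne_zero ⟨b, hb⟩ hpb.symm

theorem fixesOrKills_of_isONBasisOf_range {T : Set H}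
    (hB : Orthonormal ℂ (Subtype.val : B → H)) (hp : IsStarProjection p) (hTB : T ⊆ B)
    (hT : IsONBasisOf T (range p)) : FixesOrKills p B := by
  intro b hb
  by_cases hbT : b ∈ T
  · rw [eq_inter_fixedPoints_of_isONBasisOf_range hB hp hTB hT] at hbT
    exact .inl hbT.2
  · exact .inr (apply_eq_zero_of_isONBasisOf_range hB hp hTB hT hb hbT)

end FixesOrKills

namespace Ultragraph

section

variable {V E : Type*} {G : Ultragraph V E}

theorem InG0.biUnion {ι : Type*} {s : Finset ι} {A : ι → Set V}
    (h : ∀ i ∈ s, G.InG0 (A i)) : G.InG0 (⋃ i ∈ s, A i) := by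
  classical
  induction s using Finset.induction_on with
  | empty => simpa using InG0.empty
  | insert a s _ ih =>
    rw [Finset.set_biUnion_insert]
    exact (h a (s.mem_insert_self a)).union (ih fun i hi => h i (Finset.mem_insert_of_mem hi))

theorem InG0.biInter_range {X : Finset E} (hX : X.Nonempty) : G.InG0 (⋂ e ∈ X, G.r e) := by
  classical
  induction hX using Finset.Nonempty.cons_induction with
  | singleton e => simpa using InG0.range e
  | cons e X _ _ ih =>
    rw [Finset.cons_eq_insert, Finset.set_biInter_insert]
    exact (InG0.range e).inter ih

namespace CKFamily

variable {H : Type*} [NormedAddCommGroup H] [InnerProductSpace ℂ H] [CompleteSpace H]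
  (F : CKFamily G (H →L[ℂ] H)) {B : Set H}

theorem isStarProjection_P {A : Set V} (hA : G.InG0 A) : IsStarProjection (F.P A) :=
  ⟨(F.P_mul A A hA hA).trans (congrArg F.P (inter_self A)), F.P_star A hA⟩

theorem fixesOrKills_P (hv : ∀ v, FixesOrKills (F.P {v}) B)
    (hr : ∀ e, FixesOrKills (F.P (G.r e)) B) {A : Set V} (hA : G.InG0 A) :
    FixesOrKills (F.P A) B := by
  induction hA with
  | empty => rw [F.P_empty]; exact fun _ _ => .inr rfl
  | singleton v => exact hv v
  | range e => exact hr e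
  | union hA hC ihA ihC =>
    rw [F.P_union _ _ hA hC, ← F.P_mul _ _ hA hC]
    exact ihA.add_sub_mul ihC
  | inter hA hC ihA ihC =>
    rw [← F.P_mul _ _ hA hC]
    exact ihA.mul ihC

def fixedBasis (B : Set H) (A : Set V) : Set H :=
  B ∩ {x | F.P A x = x}

theorem fixedBasis_empty (h0 : (0 : H) ∉ B) : F.fixedBasis B ∅ = ∅ :=
  eq_empty_of_forall_notMem fun b ⟨hb, hb0⟩ => h0 (by simp_all [F.P_empty])

theorem fixedBasis_inter (h0 : (0 : H) ∉ B) (hP : ∀ A, G.InG0 A → FixesOrKills (F.P A) B)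
    {A C : Set V} (hA : G.InG0 A) (hC : G.InG0 C) :
    F.fixedBasis B (A ∩ C) = F.fixedBasis B A ∩ F.fixedBasis B C := by
  rw [fixedBasis, ← F.P_mul A C hA hC]
  exact (hP A hA).inter_fixedPoints_mul h0 (hP C hC)

theorem fixedBasis_union (h0 : (0 : H) ∉ B) (hP : ∀ A, G.InG0 A → FixesOrKills (F.P A) B)
    {A C : Set V} (hA : G.InG0 A) (hC : G.InG0 C) :
    F.fixedBasis B (A ∪ C) = F.fixedBasis B A ∪ F.fixedBasis B C := by
  rw [fixedBasis, F.P_union A C hA hC, ← F.P_mul A C hA hC]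
  exact (hP A hA).inter_fixedPoints_add_sub_mul h0 (hP C hC)

theorem fixedBasis_biUnion (h0 : (0 : H) ∉ B)
    (hP : ∀ A, G.InG0 A → FixesOrKills (F.P A) B) {ι : Type*} {s : Finset ι}
    {A : ι → Set V} (hA : ∀ i ∈ s, G.InG0 (A i)) :
    F.fixedBasis B (⋃ i ∈ s, A i) = ⋃ i ∈ s, F.fixedBasis B (A i) := by
  classical
  induction s using Finset.induction_on with
  | empty => simpa using F.fixedBasis_empty h0
  | insert a s _ ih =>
    have hs : ∀ i ∈ s, G.InG0 (A i) := fun i hi => hA i (Finset.mem_insert_of_mem hi)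
    rw [Finset.set_biUnion_insert, Finset.set_biUnion_insert,
      F.fixedBasis_union h0 hP (hA a (s.mem_insert_self a)) (InG0.biUnion hs), ih hs]

theorem fixedBasis_biInter_range (h0 : (0 : H) ∉ B)
    (hP : ∀ A, G.InG0 A → FixesOrKills (F.P A) B) {X : Finset E} (hX : X.Nonempty) :
    F.fixedBasis B (⋂ e ∈ X, G.r e) = ⋂ e ∈ X, F.fixedBasis B (G.r e) := by
  classical
  induction hX using Finset.Nonempty.cons_induction with
  | singleton e => simp
  | cons e X _ hX ih =>
    rw [Finset.cons_eq_insert, Finset.set_biInter_insert, Finset.set_biInter_insert,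
      F.fixedBasis_inter h0 hP (.range e) (.biInter_range hX), ih]

end CKFamily

end

theorem permutative_basis_of_G0_general
    {V E : Type*} {G : Ultragraph V E} {H : Type*} [NormedAddCommGroup H]
    [InnerProductSpace ℂ H] [CompleteSpace H]
    (F : CKFamily G (H →L[ℂ] H))
    (B : Set H) (Bv : V → Set H) (Bre : E → Set H)
    (hB : IsONBasisOf B Set.univ)
    (hBv : ∀ v, IsONBasisOf (Bv v) (Set.range ⇑(F.P {v})))
    (hBre : ∀ e, IsONBasisOf (Bre e) (Set.range ⇑(F.P (G.r e))))
    (hBreB : ∀ e, Bre e ⊆ B) (hBvB : ∀ v, Bv v ⊆ B) :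
    ∃ BA : Set V → Set H,
      (∀ (A : Set V) (n : ℕ) (Xs : Fin n → Finset E) (Fv : Finset V),
        (∀ i, (Xs i).Nonempty) →
        A = (⋃ i, ⋂ e ∈ Xs i, G.r e) ∪ (Fv : Set V) →
        BA A = (⋃ i, ⋂ e ∈ Xs i, Bre e) ∪ ⋃ v ∈ Fv, Bv v) ∧
      (∀ A, G.InG0 A → IsONBasisOf (BA A) (Set.range ⇑(F.P A))) ∧
      ∀ A C, G.InG0 A → G.InG0 C →
        BA A ∩ BA C = BA (A ∩ C) ∧ BA A ∪ BA C = BA (A ∪ C) := by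
  have hBo := hB.2.1
  have h0 : (0 : H) ∉ B := fun h => hBo.ne_zero ⟨0, h⟩ rfl
  have hP : ∀ A, G.InG0 A → FixesOrKills (F.P A) B := fun A => F.fixesOrKills_P
    (fun v => fixesOrKills_of_isONBasisOf_range hBo (F.isStarProjection_P (.singleton v))
      (hBvB v) (hBv v))
    (fun e => fixesOrKills_of_isONBasisOf_range hBo (F.isStarProjection_P (.range e))
      (hBreB e) (hBre e))
  have hBv_eq : ∀ v, Bv v = F.fixedBasis B {v} := fun v =>
    eq_inter_fixedPoints_of_isONBasisOf_range hBo (F.isStarProjection_P (.singleton v))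
      (hBvB v) (hBv v)
  have hBre_eq : ∀ e, Bre e = F.fixedBasis B (G.r e) := fun e =>
    eq_inter_fixedPoints_of_isONBasisOf_range hBo (F.isStarProjection_P (.range e))
      (hBreB e) (hBre e)
  refine ⟨F.fixedBasis B, fun A n Xs Fv hXs hA => ?_,
    fun A hA => isONBasisOf_inter_fixedPoints hB (hP A hA), fun A C hA hC =>
      ⟨(F.fixedBasis_inter h0 hP hA hC).symm, (F.fixedBasis_union h0 hP hA hC).symm⟩⟩
  have hA' : A = (⋃ i ∈ Finset.univ, ⋂ e ∈ Xs i, G.r e) ∪ ⋃ v ∈ Fv, {v} := by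
    simp only [hA, Finset.mem_univ, iUnion_true, ← Finset.set_biUnion_coe, biUnion_of_singleton]
  rw [hA', F.fixedBasis_union h0 hP (.biUnion fun i _ => .biInter_range (hXs i))
      (.biUnion fun v _ => .singleton v),
    F.fixedBasis_biUnion h0 hP fun i _ => .biInter_range (hXs i),
    F.fixedBasis_biUnion h0 hP fun v _ => .singleton v]
  simp only [F.fixedBasis_biInter_range h0 hP (hXs _), ← hBv_eq, ← hBre_eq,
    Finset.mem_univ, iUnion_true]

/-- For a permutative representation, `B_A` is well defined, is an orthonormal basis of
`H_A`, and respects intersections and unions. -/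
theorem permutative_basis_of_G0
    {V E : Type*} {G : Ultragraph V E} {H : Type*} [NormedAddCommGroup H]
    [InnerProductSpace ℂ H] [CompleteSpace H]
    (F : CKFamily G (H →L[ℂ] H))
    (B : Set H) (Bv : V → Set H) (Bre : E → Set H) (Be : E → Set H)
    (hB : IsONBasisOf B Set.univ)
    (hBv : ∀ v, IsONBasisOf (Bv v) (Set.range ⇑(F.P {v})))
    (hBre : ∀ e, IsONBasisOf (Bre e) (Set.range ⇑(F.P (G.r e))))
    (hBe : ∀ e, IsONBasisOf (Be e) (Set.range ⇑(F.S e * star (F.S e))))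
    (hBreB : ∀ e, Bre e ⊆ B) (hBvB : ∀ v, Bv v ⊆ B)
    (hBvBre : ∀ v e, v ∈ G.r e → Bv v ⊆ Bre e)
    (hBeBv : ∀ v, (⋃ e ∈ {e | G.s e = v}, Be e) ⊆ Bv v)
    (hB2B : ∀ e, ⇑(F.S e) '' Bre e = Be e) :
    ∃ BA : Set V → Set H,
      (∀ (A : Set V) (n : ℕ) (Xs : Fin n → Finset E) (Fv : Finset V),
        (∀ i, (Xs i).Nonempty) →
        A = (⋃ i, ⋂ e ∈ Xs i, G.r e) ∪ (Fv : Set V) →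
        BA A = (⋃ i, ⋂ e ∈ Xs i, Bre e) ∪ ⋃ v ∈ Fv, Bv v) ∧
      (∀ A, G.InG0 A → IsONBasisOf (BA A) (Set.range ⇑(F.P A))) ∧
      ∀ A C, G.InG0 A → G.InG0 C →
        BA A ∩ BA C = BA (A ∩ C) ∧ BA A ∪ BA C = BA (A ∪ C) :=
  permutative_basis_of_G0_general F B Bv Bre hB hBv hBre hBreB hBvB

end Ultragraph
end

section
/- Let G be an ultragraph, and suppose there is n ≥ 1 with X₁, …, Xₙ nonempty and (⋃_{e∈𝒢¹} r(e)) ∪ s(𝒢¹) = ⋃_{i=1}^{n}(X̄ᵢ ∪ Iᵢ). Then: (1) distinct extreme vertices in the same level Xₙ are disjoint; (2) for A ∈ X_N^fin and e with s(e) ∈ A, r(e) ∈ ⋃_{i=1}^{N−1} X_i^fin; (3) for v ∈ I_N and e ∈ s⁻¹(v), r(e) ∈ ⋃_{i=1}^{N} X_i^fin; (4) for v ∈ X_N^ini and e ∈ s⁻¹(v), r(e) ⊆ ⋃_{i=1}^{n}((⋃_{A∈X_i^fin} A) ∪ Iᵢ) ∪ ⋃_{i=N+1}^{n} X_i^ini.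 -/
open MeasureTheory Filter Set
open scoped ENNReal

universe u v w

namespace Ultragraph

variable {V : Type u} {E : Type v}

/-- `A` is an extreme (final) vertex with extreme edge `e`, relative to the edge set `F`. -/
def IsExtremeFin (G : Ultragraph V E) (F : Set E) (A : Set V) (e : E) : Prop :=
  e ∈ F ∧ A = G.r e ∧ (∀ f ∈ F, f ≠ e → A ∩ G.r f = ∅) ∧ ∀ f ∈ F, G.s f ∉ A

/-- `A` is an extreme (initial) vertex with extreme edge `e`, relative to the edge set `F`. -/
def IsExtremeIni (G : Ultragraph V E) (F : Set E) (A : Set V) (e : E) : Prop :=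
  e ∈ F ∧ A = {G.s e} ∧ (∀ f ∈ F, f ≠ e → G.s f ∉ A) ∧ ∀ f ∈ F, A ∩ G.r f = ∅

/-- Vertices isolated relative to the edge set `F`. -/
def Isol (G : Ultragraph V E) (F : Set E) : Set V :=
  {v | ∀ e ∈ F, v ∉ G.r e ∧ G.s e ≠ v}

/-- The decreasing sequence of edge sets: `Fs n` is the edge set of `𝔾ₙ`. -/
def Fs (G : Ultragraph V E) : ℕ → Set E
  | 0 => Set.univ
  | n + 1 => Fs G n \ {e | ∃ A, IsExtremeFin G (Fs G n) A e ∨ IsExtremeIni G (Fs G n) A e}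

/-- `XfinL G n` = the set `X_{n+1}^fin` of final extreme vertices (0-indexed). -/
def XfinL (G : Ultragraph V E) (n : ℕ) : Set (Set V) :=
  {A | ∃ e, IsExtremeFin G (Fs G n) A e}

/-- `XiniL G n` = the set `X_{n+1}^ini` of initial extreme vertices (0-indexed). -/
def XiniL (G : Ultragraph V E) (n : ℕ) : Set (Set V) :=
  {A | ∃ e, IsExtremeIni G (Fs G n) A e}

/-- `XbarL G n` = `X̄_{n+1}` (0-indexed). -/
def XbarL (G : Ultragraph V E) (n : ℕ) : Set V := ⋃₀ (XfinL G n ∪ XiniL G n)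

/-- `(level G n).1 = Iₙ` and `(level G n).2` = all vertices removed through stage `n`. -/
def level (G : Ultragraph V E) : ℕ → Set V × Set V
  | 0 => (Isol G Set.univ, Isol G Set.univ)
  | n + 1 =>
    (Isol G (Fs G (n + 1)) \ ((level G n).2 ∪ XbarL G n),
      (level G n).2 ∪ XbarL G n ∪ (Isol G (Fs G (n + 1)) \ ((level G n).2 ∪ XbarL G n)))

/-!
Every edge `e ∉ Fs G N` was deleted at some stage `i < N`, either as the extreme edge of the
final vertex `r(e)` or as that of the initial vertex `{s(e)}`. In claims (2)–(4) the initial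
alternative contradicts a defining condition of an extreme vertex, since edges present at stage
`N` are present at every stage `i ≤ N`. In (4) the edge may also survive to stage `N`; then the
covering hypothesis puts each point of `r(e)` in some `X̄ᵢ ∪ Iᵢ₊₁`, and an initial vertex of a
stage `i ≤ N` cannot meet `r(e)`.
-/

variable {G : Ultragraph V E}

lemma Fs_antitone : Antitone (Fs G) :=
  antitone_nat_of_succ_le fun _ _ he => he.1

lemma level_snd_monotone : Monotone fun m => (level G m).2 :=
  monotone_nat_of_le_succ fun _ _ hv => Or.inl (Or.inl hv)

lemma XbarL_subset_level_snd {i m : ℕ} (h : i < m) : XbarL G i ⊆ (level G m).2 :=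
  fun _ hv => level_snd_monotone (Nat.succ_le_of_lt h) (Or.inl (Or.inr hv))

lemma notMem_XbarL_of_mem_level_fst {N i : ℕ} {v : V} (hv : v ∈ (level G (N + 1)).1)
    (hi : i ≤ N) : v ∉ XbarL G i := by
  intro hvi
  rcases hi.lt_or_eq with hlt | rfl
  · exact hv.2 (Or.inl (XbarL_subset_level_snd hlt hvi))
  · exact hv.2 (Or.inr hvi)

lemma inter_eq_empty_of_isExtreme {F : Set E} {A B : Set V} {e f : E}
    (hA : IsExtremeFin G F A e ∨ IsExtremeIni G F A e)
    (hB : IsExtremeFin G F B f ∨ IsExtremeIni G F B f) (hAB : A ≠ B) : A ∩ B = ∅ := by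
  rcases hA with hA | hA <;> rcases hB with hB | hB
  · have hef : f ≠ e := by rintro rfl; exact hAB (hA.2.1.trans hB.2.1.symm)
    rw [hB.2.1]
    exact hA.2.2.1 f hB.1 hef
  · rw [hB.2.1]
    exact inter_singleton_eq_empty.mpr (hA.2.2.2 f hB.1)
  · rw [hA.2.1]
    exact singleton_inter_eq_empty.mpr (hB.2.2.2 e hA.1)
  · have hef : f ≠ e := by rintro rfl; exact hAB (hA.2.1.trans hB.2.1.symm)
    rw [hB.2.1]
    exact inter_singleton_eq_empty.mpr (hA.2.2.1 f hB.1 hef)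

lemma range_mem_XfinL_or_isExtremeIni_of_notMem_Fs {e : E} {N : ℕ} (h : e ∉ Fs G N) :
    G.r e ∈ ⋃ i ∈ Finset.range N, XfinL G i ∨
      ∃ i < N, IsExtremeIni G (Fs G i) {G.s e} e := by
  induction N with
  | zero => exact absurd trivial h
  | succ N ih =>
    by_cases hN : e ∈ Fs G N
    · obtain ⟨A, hA | hA⟩ :
          ∃ A, IsExtremeFin G (Fs G N) A e ∨ IsExtremeIni G (Fs G N) A e :=
        not_not.mp fun hc => h ⟨hN, hc⟩
      · exact Or.inl (mem_iUnion₂.mpr ⟨N, Finset.self_mem_range_succ N, e, hA.2.1 ▸ hA⟩)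
      · exact Or.inr ⟨N, N.lt_succ_self, hA.2.1 ▸ hA⟩
    · refine (ih hN).imp (fun hfin => ?_)
        fun ⟨i, hi, hini⟩ => ⟨i, hi.trans N.lt_succ_self, hini⟩
      obtain ⟨i, hi, hXi⟩ := mem_iUnion₂.mp hfin
      exact mem_iUnion₂.mpr ⟨i, Finset.range_subset_range.mpr N.le_succ hi, hXi⟩

lemma range_mem_XfinL_of_source_mem_XfinL {N : ℕ} {A : Set V} (hA : A ∈ XfinL G N) {e : E}
    (he : G.s e ∈ A) : G.r e ∈ ⋃ i ∈ Finset.range N, XfinL G i := by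
  obtain ⟨e₀, he₀⟩ := hA
  refine (range_mem_XfinL_or_isExtremeIni_of_notMem_Fs fun heN => he₀.2.2.2 e heN he)
    |>.resolve_right ?_
  rintro ⟨i, hi, hini⟩
  have hmeet : G.s e ∈ {G.s e} ∩ G.r e₀ := ⟨rfl, he₀.2.1 ▸ he⟩
  exact (hini.2.2.2 e₀ (Fs_antitone hi.le he₀.1)).subset hmeet

lemma range_mem_XfinL_of_source_mem_level {N : ℕ} {v : V} (hv : v ∈ (level G (N + 1)).1)
    {e : E} (he : G.s e = v) : G.r e ∈ ⋃ i ∈ Finset.range (N + 1), XfinL G i := by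
  refine (range_mem_XfinL_or_isExtremeIni_of_notMem_Fs fun heN => (hv.1 e heN).2 he)
    |>.resolve_right ?_
  rintro ⟨i, hi, hini⟩
  exact notMem_XbarL_of_mem_level_fst hv (Nat.lt_succ_iff.mp hi)
    ⟨{G.s e}, Or.inr ⟨e, hini⟩, he.symm⟩

lemma range_mem_XfinL_of_notMem_Fs_of_singleton_mem_XiniL {N : ℕ} {v : V}
    (hv : {v} ∈ XiniL G N) {e : E} (he : G.s e = v) (heN : e ∉ Fs G N) :
    G.r e ∈ ⋃ i ∈ Finset.range N, XfinL G i := by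
  obtain ⟨e₀, he₀⟩ := hv
  refine (range_mem_XfinL_or_isExtremeIni_of_notMem_Fs heN).resolve_right ?_
  rintro ⟨i, hi, hini⟩
  have hne : e₀ ≠ e := by rintro rfl; exact heN he₀.1
  have hs : G.s e₀ = G.s e := (he.trans (singleton_eq_singleton_iff.mp he₀.2.1)).symm
  exact hini.2.2.1 e₀ (Fs_antitone hi.le he₀.1) hne hs

lemma notMem_sUnion_XiniL_of_mem_range {N i : ℕ} {e : E} (he : e ∈ Fs G N) (hi : i ≤ N)
    {w : V} (hw : w ∈ G.r e) : w ∉ ⋃₀ XiniL G i := by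
  rintro ⟨C, ⟨f, hf⟩, hwC⟩
  exact (hf.2.2.2 e (Fs_antitone hi he)).subset ⟨hwC, hw⟩

lemma range_subset_of_singleton_mem_XiniL {n N : ℕ} (hN : N < n)
    (hcover : (⋃ e, G.r e) ∪ Set.range G.s =
      ⋃ i ∈ Finset.range n, (XbarL G i ∪ (level G (i + 1)).1))
    {v : V} (hv : {v} ∈ XiniL G N) {e : E} (he : G.s e = v) :
    G.r e ⊆ (⋃ i ∈ Finset.range n, (⋃₀ XfinL G i ∪ (level G (i + 1)).1)) ∪
      ⋃ i ∈ Finset.Ico (N + 1) n, ⋃₀ XiniL G i := by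
  intro w hw
  by_cases heN : e ∈ Fs G N
  · have hwcover : w ∈ ⋃ i ∈ Finset.range n, (XbarL G i ∪ (level G (i + 1)).1) :=
      hcover ▸ Or.inl (mem_iUnion.mpr ⟨e, hw⟩)
    obtain ⟨i, hi, ⟨C, hCfin | hCini, hwC⟩ | hI⟩ := mem_iUnion₂.mp hwcover
    · exact Or.inl (mem_iUnion₂.mpr ⟨i, hi, Or.inl ⟨C, hCfin, hwC⟩⟩)
    · have hNi : N < i := lt_of_not_ge fun hle =>
        notMem_sUnion_XiniL_of_mem_range heN hle hw ⟨C, hCini, hwC⟩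
      exact Or.inr (mem_iUnion₂.mpr
        ⟨i, Finset.mem_Ico.mpr ⟨hNi, Finset.mem_range.mp hi⟩, C, hCini, hwC⟩)
    · exact Or.inl (mem_iUnion₂.mpr ⟨i, hi, Or.inr hI⟩)
  · obtain ⟨i, hi, hfin⟩ :=
      mem_iUnion₂.mp (range_mem_XfinL_of_notMem_Fs_of_singleton_mem_XiniL hv he heN)
    exact Or.inl (mem_iUnion₂.mpr ⟨i, Finset.mem_range.mpr ((Finset.mem_range.mp hi).trans hN),
      Or.inl ⟨G.r e, hfin, hw⟩⟩)

theorem extreme_vertices_structure_general (G : Ultragraph V E) (n : ℕ)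
    (hcover : (⋃ e, G.r e) ∪ Set.range G.s =
      ⋃ i ∈ Finset.range n, (XbarL G i ∪ (level G (i + 1)).1)) :
    (∀ N < n, ∀ A ∈ XfinL G N ∪ XiniL G N, ∀ B ∈ XfinL G N ∪ XiniL G N,
      A ≠ B → A ∩ B = ∅) ∧
    (∀ N < n, ∀ A ∈ XfinL G N, ∀ e, G.s e ∈ A →
      G.r e ∈ ⋃ i ∈ Finset.range N, XfinL G i) ∧
    (∀ N, 1 ≤ N → N ≤ n → ∀ v ∈ (level G N).1, ∀ e, G.s e = v →
      G.r e ∈ ⋃ i ∈ Finset.range N, XfinL G i) ∧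
    ∀ N < n, ∀ v : V, {v} ∈ XiniL G N → ∀ e, G.s e = v →
      G.r e ⊆ (⋃ i ∈ Finset.range n, (⋃₀ XfinL G i ∪ (level G (i + 1)).1)) ∪
        ⋃ i ∈ Finset.Ico (N + 1) n, ⋃₀ XiniL G i := by
  refine ⟨?_, fun N _ A hA e he => range_mem_XfinL_of_source_mem_XfinL hA he, ?_,
    fun N hN v hv e he => range_subset_of_singleton_mem_XiniL hN hcover hv he⟩
  · rintro N - A (⟨e, hA⟩ | ⟨e, hA⟩) B (⟨f, hB⟩ | ⟨f, hB⟩) hAB <;>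
      exact inter_eq_empty_of_isExtreme (by tauto) (by tauto) hAB
  · rintro N hN - v hv e he
    obtain ⟨m, rfl⟩ := Nat.exists_eq_add_of_le' hN
    exact range_mem_XfinL_of_source_mem_level hv he

/-- Structure of ultragraphs exhausted by extreme vertices and isolated vertices. -/
theorem extreme_vertices_structure (G : Ultragraph V E) (n : ℕ) (hn : 1 ≤ n)
    (hX : ∀ i < n, (XfinL G i ∪ XiniL G i).Nonempty)
    (hcover : (⋃ e, G.r e) ∪ Set.range G.s =
      ⋃ i ∈ Finset.range n, (XbarL G i ∪ (level G (i + 1)).1)) :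
    (∀ N < n, ∀ A ∈ XfinL G N ∪ XiniL G N, ∀ B ∈ XfinL G N ∪ XiniL G N,
      A ≠ B → A ∩ B = ∅) ∧
    (∀ N < n, ∀ A ∈ XfinL G N, ∀ e, G.s e ∈ A →
      G.r e ∈ ⋃ i ∈ Finset.range N, XfinL G i) ∧
    (∀ N, 1 ≤ N → N ≤ n → ∀ v ∈ (level G N).1, ∀ e, G.s e = v →
      G.r e ∈ ⋃ i ∈ Finset.range N, XfinL G i) ∧
    ∀ N < n, ∀ v : V, {v} ∈ XiniL G N → ∀ e, G.s e = v →
      G.r e ⊆ (⋃ i ∈ Finset.range n, (⋃₀ XfinL G i ∪ (level G (i + 1)).1)) ∪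
        ⋃ i ∈ Finset.Ico (N + 1) n, ⋃₀ XiniL G i :=
  extreme_vertices_structure_general G n hcover

end Ultragraph
end
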